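/- arXiv:2505.11193 — 3 statements merged into one kernel-verified Lean document; each statement's English description precedes it below -/
import Mathlib

section
/- Let T be a finite rooted tree and r a nonnegative integer. Then ex(Down-Stem_r(T)) − N^E_r(T) ∈ {−1, 0, +1}, where ex(H) denotes the number of exterior major vertices of a graph H. -/
open SimpleGraph

/-- The number of neighbours of `v` (in `G`) that lie in the vertex set `A`:
the degree of `v` in the subgraph of `G` induced by `A`. -/
def degIn {V : Type*} [DecidableEq V] (G : SimpleGraph V) [DecidableRel G.Adj]
    (A : Finset V) (v : V) : ℕ :=
  (A.filter fun w => G.Adj v w).card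

/-- Iterated stemming of the vertex set `A`: at each step remove the vertices of
(induced) degree at most 1. -/
def stemIter {V : Type*} [DecidableEq V] (G : SimpleGraph V) [DecidableRel G.Adj]
    (A : Finset V) : ℕ → Finset V
  | 0 => A
  | r + 1 => (stemIter G A r).filter fun v => 1 < degIn G (stemIter G A r) v

/-- The vertex set of `Stem_r(G)`. -/
def stemSet {V : Type*} [Fintype V] [DecidableEq V] (G : SimpleGraph V) [DecidableRel G.Adj]
    (r : ℕ) : Finset V :=
  stemIter G Finset.univ r

/-- Iterated down-stemming of the vertex set `A` of a rooted graph: at each step remove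
the vertices of (induced) degree at most 1, but always keep the root. -/
def downStemIter {V : Type*} [DecidableEq V] (G : SimpleGraph V) [DecidableRel G.Adj]
    (root : V) (A : Finset V) : ℕ → Finset V
  | 0 => A
  | r + 1 => (downStemIter G root A r).filter
      fun v => v = root ∨ 1 < degIn G (downStemIter G root A r) v

/-- In the subgraph of `G` induced by `A`, there is a leaf path from `v` to the leaf `u`:
a path from `v` to `u` inside `A`, all of whose internal vertices have induced degree 2,
ending at a vertex `u` of induced degree 1. -/
def IsLeafPathIn {V : Type*} [DecidableEq V] (G : SimpleGraph V) [DecidableRel G.Adj]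
    (A : Finset V) (v u : V) : Prop :=
  ∃ p : G.Walk v u, p.IsPath ∧ 0 < p.length ∧ (∀ w ∈ p.support, w ∈ A) ∧
    degIn G A u = 1 ∧ ∀ w ∈ p.support, w ≠ v → w ≠ u → degIn G A w = 2

/-- `v` is an exterior major vertex of the subgraph of `G` induced by `A`:
it has induced degree at least 3 and at least one adjacent leaf path. -/
def IsExtMajorIn {V : Type*} [DecidableEq V] (G : SimpleGraph V) [DecidableRel G.Adj]
    (A : Finset V) (v : V) : Prop :=
  v ∈ A ∧ 3 ≤ degIn G A v ∧ ∃ u, IsLeafPathIn G A v u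

/-- The number of exterior major vertices of the subgraph of `G` induced by `A`. -/
noncomputable def exIn {V : Type*} [DecidableEq V] (G : SimpleGraph V) [DecidableRel G.Adj]
    (A : Finset V) : ℕ :=
  {v | IsExtMajorIn G A v}.ncard

/-- The leaves (vertices of induced degree 1) of the subgraph of `G` induced by `A`. -/
def leavesIn {V : Type*} [DecidableEq V] (G : SimpleGraph V) [DecidableRel G.Adj]
    (A : Finset V) : Finset V :=
  A.filter fun v => degIn G A v = 1

/-- The number of leaves of the subgraph of `G` induced by `A`. -/
def sigmaIn {V : Type*} [DecidableEq V] (G : SimpleGraph V) [DecidableRel G.Adj]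
    (A : Finset V) : ℕ :=
  (leavesIn G A).card

/-- The subgraph of `G` induced by `A` is a path graph (possibly empty). -/
def IsPathGraphOn {V : Type*} (G : SimpleGraph V) (A : Finset V) : Prop :=
  ∃ n, Nonempty ((G.induce (A : Set V)) ≃g pathGraph n)

/-- `S` is a `k`-relaxed resolving set of `G`: any two vertices with the same
identification vector (distances to the vertices of `S`) are at distance at most `k`. -/
def IsRelaxedResolving {V : Type*} (G : SimpleGraph V) (k : ℕ) (S : Set V) : Prop :=
  ∀ u v : V, (∀ s ∈ S, G.dist u s = G.dist v s) → G.dist u v ≤ k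

/-- The `k`-relaxed metric dimension of `G`: the minimum cardinality of a `k`-relaxed
resolving set. -/
noncomputable def MDk {V : Type*} (G : SimpleGraph V) (k : ℕ) : ℕ :=
  sInf {n | ∃ S : Finset V, IsRelaxedResolving G k ↑S ∧ S.card = n}

/-- The set of descendants of `v` in the tree `G` rooted at `root` (including `v` itself):
the vertices `w` such that `v` lies on the path from `root` to `w`. -/
noncomputable def descSet {V : Type*} [Fintype V] (G : SimpleGraph V) (root v : V) :
    Finset V :=
  Finset.univ.filter fun w => G.dist root v + G.dist v w = G.dist root w

/-- The height of the subtree `T_v` of the tree `G` rooted at `root`: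
the maximal distance from `v` to one of its descendants. -/
noncomputable def heightAt {V : Type*} [Fintype V] (G : SimpleGraph V) (root v : V) : ℕ :=
  (descSet G root v).sup (G.dist v)

/-- `N^L_r(T)`: the number of vertices `v` whose subtree `T_v` has height exactly `r`. -/
noncomputable def NL {V : Type*} [Fintype V] (G : SimpleGraph V) (root : V) (r : ℕ) : ℕ :=
  (Finset.univ.filter fun v => heightAt G root v = r).card

/-- The subtree property `P^E_r` at `v`: in `Down-Stem_r(T_v)` the root `v` has degree at
least two, and at least one of its child subtrees is a path to a leaf. -/
noncomputable def NEprop {V : Type*} [Fintype V] [DecidableEq V] (G : SimpleGraph V)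
    [DecidableRel G.Adj] (root : V) (r : ℕ) (v : V) : Prop :=
  2 ≤ degIn G (downStemIter G v (descSet G root v) r) v ∧
    ∃ u, IsLeafPathIn G (downStemIter G v (descSet G root v) r) v u

/-- `N^E_r(T)`: the number of vertices satisfying the subtree property `P^E_r`. -/
noncomputable def NE {V : Type*} [Fintype V] [DecidableEq V] (G : SimpleGraph V)
    [DecidableRel G.Adj] (root : V) (r : ℕ) : ℕ :=
  {v | NEprop G root r v}.ncard

section Aux
set_option linter.unusedSectionVars false
set_option linter.unusedVariables false
open SimpleGraph Walk

variable {V : Type*} [Fintype V] [DecidableEq V] {T : SimpleGraph V} [DecidableRel T.Adj]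

/-- Any path in a tree realizes the distance. -/
lemma tree_path_length (hT : T.IsTree) {u v : V} {p : T.Walk u v} (hp : p.IsPath) :
    p.length = T.dist u v := by
  obtain ⟨q, hq, hlen⟩ := hT.isConnected.exists_path_of_dist u v
  have : (⟨p, hp⟩ : T.Path u v) = ⟨q, hq⟩ := hT.IsAcyclic.path_unique _ _
  rw [show p = q from congrArg Subtype.val this, hlen]

lemma dist_split (hT : T.IsTree) {u v w : V} {p : T.Walk u v} (hp : p.IsPath)
    (hw : w ∈ p.support) : T.dist u w + T.dist w v = T.dist u v := by
  rw [← tree_path_length hT (hp.takeUntil hw), ← tree_path_length hT (hp.dropUntil hw),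
    ← tree_path_length hT hp, ← length_append, take_spec]

lemma adj_dist_one {u v : V} (h : T.Adj u v) : T.dist u v = 1 :=
  SimpleGraph.dist_eq_one_iff_adj.mpr h

lemma dist_zero_iff (hT : T.IsTree) {u v : V} : T.dist u v = 0 ↔ u = v :=
  (hT.isConnected u v).dist_eq_zero_iff

lemma lvl_mem_le (hT : T.IsTree) {a x z : V} {p : T.Walk a x} (hz : z ∈ p.support) :
    T.dist a z ≤ p.length :=
  le_trans (SimpleGraph.dist_le (p.takeUntil z hz)) (length_takeUntil_le p hz)

/-- All steps of the walk go away from `root` in level. -/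
def AllDown (T : SimpleGraph V) [DecidableRel T.Adj] (root : V) {x y : V} (p : T.Walk x y) :
    Prop :=
  ∀ d ∈ p.darts, T.dist root d.snd = T.dist root d.fst + 1

lemma allDown_nil {root x : V} : AllDown T root (Walk.nil : T.Walk x x) := by
  intro d hd; simp [Walk.darts_nil] at hd

lemma allDown_cons {root u b y : V} (h : T.Adj u b) (q : T.Walk b y) :
    AllDown T root (Walk.cons h q) ↔
      (T.dist root b = T.dist root u + 1 ∧ AllDown T root q) := by
  constructor
  · intro hd
    refine ⟨hd ⟨(u, b), h⟩ (by simp [Walk.darts_cons]), fun d hdm => hd d ?_⟩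
    simp [Walk.darts_cons]; right; exact hdm
  · rintro ⟨h1, h2⟩ d hd
    rcases (by simpa [Walk.darts_cons] using hd) with rfl | hd'
    · exact h1
    · exact h2 d hd'

lemma allDown_length {root : V} : ∀ {x y : V} (p : T.Walk x y), AllDown T root p →
    T.dist root y = T.dist root x + p.length := by
  intro x y p
  induction p with
  | nil => intro _; simp
  | cons h q ih =>
    intro hd
    rw [allDown_cons] at hd
    rw [Walk.length_cons, ih hd.2, hd.1]
    omega

lemma allDown_lvl_le {root : V} : ∀ {x y : V} (p : T.Walk x y), AllDown T root p →
    ∀ z ∈ p.support, T.dist root x ≤ T.dist root z := by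
  intro x y p
  induction p with
  | nil => intro _ z hz; rw [Walk.mem_support_nil_iff] at hz; subst hz; exact le_refl _
  | cons h q ih =>
    intro hd z hz
    rw [allDown_cons] at hd
    rcases (by simpa [Walk.support_cons] using hz) with rfl | hz'
    · exact le_refl _
    · exact le_trans (by omega) (ih hd.2 z hz')

/-- Meeting lemma: two paths from a common start either one contains the other's endpoint,
or they diverge at some vertex. -/
lemma meet (root y : V) : ∀ {a x : V} (P : T.Walk a x), P.IsPath →
    ∀ (Q : T.Walk a y), Q.IsPath →
    x ∈ Q.support ∨ y ∈ P.support ∨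
      ∃ (b c₁ c₂ : V) (h₁ : T.Adj b c₁) (h₂ : T.Adj b c₂)
        (P₂ : T.Walk c₁ x) (Q₂ : T.Walk c₂ y),
        c₁ ≠ c₂ ∧ b ∈ P.support ∧ b ∈ Q.support ∧
        (Walk.cons h₁ P₂).IsPath ∧ (Walk.cons h₂ Q₂).IsPath ∧
        (Walk.cons h₁ P₂).support ⊆ P.support ∧ (Walk.cons h₂ Q₂).support ⊆ Q.support ∧
        (AllDown T root P → T.dist root c₁ = T.dist root b + 1 ∧ AllDown T root P₂) ∧
        (AllDown T root Q → T.dist root c₂ = T.dist root b + 1 ∧ AllDown T root Q₂) := by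
  intro a x P
  induction P with
  | nil =>
    intro _ Q hQ
    exact Or.inl Q.start_mem_support
  | @cons a b x h P' ih =>
    intro hP Q hQ
    cases Q with
    | nil =>
      exact Or.inr (Or.inl (Walk.start_mem_support _))
    | @cons _ b2 _ h2 Q' =>
      by_cases hbb : b = b2
      · subst hbb
        rcases ih hP.of_cons Q' hQ.of_cons with h1 | h1 | ⟨b', c₁, c₂, h₁, h₂, P₂, Q₂,
            hne, hbP, hbQ, hp1, hp2, hs1, hs2, hd1, hd2⟩
        · left; rw [Walk.support_cons]; exact List.mem_cons_of_mem _ h1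
        · right; left; rw [Walk.support_cons]; exact List.mem_cons_of_mem _ h1
        · right; right
          have hsubP : P'.support ⊆ (Walk.cons h P').support := by
            rw [Walk.support_cons]; exact fun z hz => List.mem_cons_of_mem _ hz
          have hsubQ : Q'.support ⊆ (Walk.cons h2 Q').support := by
            rw [Walk.support_cons]; exact fun z hz => List.mem_cons_of_mem _ hz
          exact ⟨b', c₁, c₂, h₁, h₂, P₂, Q₂, hne, hsubP hbP, hsubQ hbQ, hp1, hp2,
            fun z hz => hsubP (hs1 hz), fun z hz => hsubQ (hs2 hz),
            fun hd => hd1 ((allDown_cons _ _).mp hd).2,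
            fun hd => hd2 ((allDown_cons _ _).mp hd).2⟩
      · right; right
        exact ⟨a, b, b2, h, h2, P', Q', hbb, Walk.start_mem_support _,
          Walk.start_mem_support _, hP, hQ, fun z hz => hz, fun z hz => hz,
          fun hd => (allDown_cons _ _).mp hd,
          fun hd => (allDown_cons _ _).mp hd⟩

/-- In a tree two paths leaving `b` by distinct first edges share only `b`. -/
lemma disj_of_diverge (hT : T.IsTree) {b c₁ c₂ x' y' : V} {h₁ : T.Adj b c₁} {h₂ : T.Adj b c₂}
    {P₂ : T.Walk c₁ x'} {Q₂ : T.Walk c₂ y'} (hne : c₁ ≠ c₂)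
    (hp1 : (Walk.cons h₁ P₂).IsPath) (hp2 : (Walk.cons h₂ Q₂).IsPath) :
    ∀ z, z ∈ (Walk.cons h₁ P₂).support → z ∈ (Walk.cons h₂ Q₂).support → z = b := by
  intro z hz1 hz2
  by_contra hzb
  have hz1' : z ∈ P₂.support := by
    rcases (by simpa [Walk.support_cons] using hz1) with rfl | hz; exact absurd rfl hzb; exact hz
  have hz2' : z ∈ Q₂.support := by
    rcases (by simpa [Walk.support_cons] using hz2) with rfl | hz; exact absurd rfl hzb; exact hz
  rw [Walk.cons_isPath_iff] at hp1 hp2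
  have hR1 : (Walk.cons h₁ (P₂.takeUntil z hz1')).IsPath := by
    refine (Walk.cons_isPath_iff _ _).mpr ⟨hp1.1.takeUntil _, fun hb => hp1.2 ?_⟩
    exact Walk.support_takeUntil_subset _ _ hb
  have hR2 : (Walk.cons h₂ (Q₂.takeUntil z hz2')).IsPath := by
    refine (Walk.cons_isPath_iff _ _).mpr ⟨hp2.1.takeUntil _, fun hb => hp2.2 ?_⟩
    exact Walk.support_takeUntil_subset _ _ hb
  have := hT.IsAcyclic.path_unique ⟨_, hR1⟩ ⟨_, hR2⟩
  have heq : (Walk.cons h₁ (P₂.takeUntil z hz1')) = (Walk.cons h₂ (Q₂.takeUntil z hz2')) :=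
    congrArg Subtype.val this
  have : c₁ = c₂ := by
    have := congrArg (fun w => w.getVert 1) heq
    simpa [Walk.getVert_cons_succ, Walk.getVert_zero] using this
  exact hne this

end Aux
section Aux2
set_option linter.unusedSectionVars false
set_option linter.unusedVariables false
open SimpleGraph Walk

variable {V : Type*} [Fintype V] [DecidableEq V] {T : SimpleGraph V} [DecidableRel T.Adj]

/-- Adjacent vertices differ in level by exactly one. -/
lemma adj_lvl (hT : T.IsTree) (root : V) {v w : V} (h : T.Adj v w) :
    T.dist root w = T.dist root v + 1 ∨ T.dist root v = T.dist root w + 1 := by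
  obtain ⟨P, hP, hPl⟩ := hT.isConnected.exists_path_of_dist root v
  obtain ⟨Q, hQ, hQl⟩ := hT.isConnected.exists_path_of_dist root w
  rcases meet root w P hP Q hQ with hm | hm | ⟨b, c₁, c₂, h₁, h₂, P₂, Q₂, hne, hbP, hbQ,
      hp1, hp2, hs1, hs2, _, _⟩
  · left
    have hs := dist_split hT hQ hm
    rw [adj_dist_one h] at hs; omega
  · right
    have hs := dist_split hT hP hm
    rw [adj_dist_one (T.adj_symm h)] at hs; omega
  · exfalso
    have hdisj := disj_of_diverge hT hne hp1 hp2
    have hbQ2 : b ∉ Q₂.support := ((Walk.cons_isPath_iff _ _).mp hp2).2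
    set R : T.Walk v w := (Walk.cons h₁ P₂).reverse.append (Walk.cons h₂ Q₂) with hR
    have hRpath : R.IsPath := by
      rw [Walk.isPath_def, Walk.support_append, List.nodup_append]
      refine ⟨by rw [← Walk.isPath_def]; exact hp1.reverse, ?_, ?_⟩
      · rw [Walk.support_cons, List.tail_cons, ← Walk.isPath_def]
        exact ((Walk.cons_isPath_iff _ _).mp hp2).1
      · intro z hz1 z' hz2 hzz'
        subst hzz'
        rw [Walk.support_cons, List.tail_cons] at hz2
        have hz1' : z ∈ (Walk.cons h₁ P₂).support := by
          rw [Walk.support_reverse] at hz1; exact List.mem_reverse.mp hz1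
        have : z = b := hdisj z hz1' (by rw [Walk.support_cons]; exact List.mem_cons_of_mem _ hz2)
        subst this
        exact hbQ2 hz2
    have hlen := tree_path_length hT hRpath
    rw [adj_dist_one h] at hlen
    rw [hR] at hlen
    rw [Walk.length_append, Walk.length_reverse] at hlen
    simp [Walk.length_cons] at hlen
    omega

lemma lvl_root (root : V) : T.dist root root = 0 := SimpleGraph.dist_self

lemma exists_parent (hT : T.IsTree) (root : V) {v : V} (hv : v ≠ root) :
    ∃ w, T.Adj v w ∧ T.dist root w + 1 = T.dist root v := by
  obtain ⟨P, hP, hPl⟩ := hT.isConnected.exists_path_of_dist root v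
  obtain ⟨w, h, q, hq⟩ := Walk.exists_eq_cons_of_ne hv P.reverse
  have hqpath : q.IsPath := by
    have := hP.reverse
    rw [hq] at this
    exact this.of_cons
  have hql : q.length = T.dist root w := by
    rw [tree_path_length hT hqpath, SimpleGraph.dist_comm]
  have hlen : P.reverse.length = 1 + q.length := by rw [hq, Walk.length_cons]; omega
  rw [Walk.length_reverse, hPl] at hlen
  exact ⟨w, h, by omega⟩

lemma parent_unique (hT : T.IsTree) (root : V) {v w w' : V} (h : T.Adj v w)
    (hl : T.dist root w + 1 = T.dist root v) (h' : T.Adj v w')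
    (hl' : T.dist root w' + 1 = T.dist root v) : w = w' := by
  obtain ⟨P, hP, hPl⟩ := hT.isConnected.exists_path_of_dist root w
  obtain ⟨P', hP', hPl'⟩ := hT.isConnected.exists_path_of_dist root w'
  have hvP : v ∉ P.support := fun hmem => by
    have := lvl_mem_le hT hmem; omega
  have hvP' : v ∉ P'.support := fun hmem => by
    have := lvl_mem_le hT hmem; omega
  have hR : (Walk.cons h P.reverse).IsPath := by
    refine hP.reverse.cons ?_
    rw [Walk.support_reverse]; exact fun hc => hvP (List.mem_reverse.mp hc)
  have hR' : (Walk.cons h' P'.reverse).IsPath := by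
    refine hP'.reverse.cons ?_
    rw [Walk.support_reverse]; exact fun hc => hvP' (List.mem_reverse.mp hc)
  have heq : (Walk.cons h P.reverse) = (Walk.cons h' P'.reverse) :=
    congrArg Subtype.val (hT.IsAcyclic.path_unique ⟨_, hR⟩ ⟨_, hR'⟩)
  have := congrArg (fun q => q.getVert 1) heq
  simpa [Walk.getVert_cons_succ, Walk.getVert_zero] using this

/-- The parent of a vertex. -/
noncomputable def par (hT : T.IsTree) (root : V) (v : V) : V :=
  if h : v = root then root else Classical.choose (exists_parent hT root h)

lemma par_spec (hT : T.IsTree) (root : V) {v : V} (hv : v ≠ root) :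
    T.Adj v (par hT root v) ∧ T.dist root (par hT root v) + 1 = T.dist root v := by
  rw [par, dif_neg hv]
  exact Classical.choose_spec (exists_parent hT root hv)

lemma eq_par (hT : T.IsTree) (root : V) {v w : V} (hv : v ≠ root) (h : T.Adj v w)
    (hl : T.dist root w + 1 = T.dist root v) : w = par hT root v :=
  parent_unique hT root h hl (par_spec hT root hv).1 (par_spec hT root hv).2

lemma allDown_aux (hT : T.IsTree) (root : V) : ∀ {x y : V} (q : T.Walk x y), q.IsPath →
    ∀ prev, T.Adj prev x → T.dist root x = T.dist root prev + 1 → prev ∉ q.support →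
    AllDown T root q := by
  intro x y q
  induction q with
  | nil => exact fun _ _ _ _ _ => allDown_nil
  | @cons x c y h' q' ih =>
    intro hq prev hadj hl hprev
    have hxr : x ≠ root := fun hr => by rw [hr, lvl_root] at hl; omega
    have hc : T.dist root c = T.dist root x + 1 := by
      rcases adj_lvl hT root h' with h1 | h1
      · exact h1
      · exfalso
        have : c = prev := by
          have e1 : c = par hT root x := eq_par hT root hxr h' (by omega)
          have e2 : prev = par hT root x := eq_par hT root hxr (T.adj_symm hadj) (by omega)
          rw [e1, e2]
        subst this
        exact hprev (by rw [Walk.support_cons]; exact List.mem_cons_of_mem _ q'.start_mem_support)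
    rw [allDown_cons]
    refine ⟨hc, ih hq.of_cons x h' hc ?_⟩
    exact ((Walk.cons_isPath_iff _ _).mp hq).2

lemma allDown_of_root (hT : T.IsTree) {root y : V} (P : T.Walk root y) (hP : P.IsPath) :
    AllDown T root P := by
  cases P with
  | nil => exact allDown_nil
  | @cons _ b _ h q =>
    have hb : T.dist root b = T.dist root root + 1 := by
      rcases adj_lvl hT root h with h1 | h1
      · exact h1
      · rw [lvl_root] at h1; omega
    rw [allDown_cons]
    refine ⟨hb, allDown_aux hT root q hP.of_cons root h hb ?_⟩
    exact ((Walk.cons_isPath_iff _ _).mp hP).2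

end Aux2
section Aux3
set_option linter.unusedSectionVars false
set_option linter.unusedVariables false
open SimpleGraph Walk

variable {V : Type*} [Fintype V] [DecidableEq V] {T : SimpleGraph V} [DecidableRel T.Adj]

lemma mem_desc {root v w : V} :
    w ∈ descSet T root v ↔ T.dist root v + T.dist v w = T.dist root w := by
  simp [descSet]

lemma desc_self (root v : V) : v ∈ descSet T root v := by
  rw [mem_desc, SimpleGraph.dist_self]
  omega

lemma desc_root_eq_univ (root : V) : descSet T root root = Finset.univ := by
  ext w; simp [descSet, SimpleGraph.dist_self]

lemma lvl_le_of_desc {root v w : V} (h : w ∈ descSet T root v) :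
    T.dist root v ≤ T.dist root w := by
  rw [mem_desc] at h; omega

lemma lvl_lt_of_desc (hT : T.IsTree) {root v w : V} (h : w ∈ descSet T root v) (hw : w ≠ v) :
    T.dist root v < T.dist root w := by
  rw [mem_desc] at h
  have : T.dist v w ≠ 0 := fun h0 => hw ((dist_zero_iff hT).mp h0).symm
  omega

lemma root_not_desc (hT : T.IsTree) {root v : V} (hv : v ≠ root) :
    root ∉ descSet T root v := by
  intro h
  have := lvl_lt_of_desc hT h (fun e => hv e.symm)
  rw [lvl_root] at this; omega

/-- Any vertex on a path from `v` to a descendant of `v` is a descendant of `v`. -/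
lemma support_sub_desc (hT : T.IsTree) {root v u : V} (hu : u ∈ descSet T root v)
    {p : T.Walk v u} (hp : p.IsPath) : ∀ y ∈ p.support, y ∈ descSet T root v := by
  intro y hy
  have h1 := dist_split hT hp hy
  have h2 : T.dist root y ≤ T.dist root v + T.dist v y := hT.isConnected.dist_triangle
  have h3 : T.dist root u ≤ T.dist root y + T.dist y u := hT.isConnected.dist_triangle
  rw [mem_desc] at hu ⊢
  omega

lemma allDown_desc (hT : T.IsTree) {root v u : V} {p : T.Walk v u}
    (hd : AllDown T root p) : u ∈ descSet T root v := by
  have h1 := allDown_length p hd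
  have h2 : T.dist v u ≤ p.length := SimpleGraph.dist_le p
  have h3 : T.dist root u ≤ T.dist root v + T.dist v u := hT.isConnected.dist_triangle
  rw [mem_desc]
  omega

lemma par_not_desc (hT : T.IsTree) {root v : V} (hv : v ≠ root) :
    par hT root v ∉ descSet T root v := by
  intro h
  have h1 := (par_spec hT root hv).2
  have h2 := lvl_le_of_desc h
  omega

lemma child_desc (hT : T.IsTree) {root v x : V} (h : T.Adj v x)
    (hl : T.dist root x = T.dist root v + 1) : x ∈ descSet T root v := by
  rw [mem_desc, adj_dist_one h]
  omega

/-- Neighbours of strict descendants of `v` are descendants of `v`. -/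
lemma desc_neighbor (hT : T.IsTree) {root v w x : V} (hw : w ∈ descSet T root v)
    (hwv : w ≠ v) (h : T.Adj w x) : x ∈ descSet T root v := by
  rcases adj_lvl hT root h with h1 | h1
  · -- x is a child of w
    have h2 : T.dist v x ≤ T.dist v w + 1 := by
      have := hT.isConnected.dist_triangle (u := v) (v := w) (w := x)
      rw [adj_dist_one h] at this; omega
    have h3 : T.dist root x ≤ T.dist root v + T.dist v x := hT.isConnected.dist_triangle
    rw [mem_desc] at hw ⊢
    omega
  · -- x is the parent of w; show it lies on the path from v to w
    obtain ⟨P, hP, hPl⟩ := hT.isConnected.exists_path_of_dist v w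
    obtain ⟨z, hz, q, hq⟩ := Walk.exists_eq_cons_of_ne hwv P.reverse
    have hzP : z ∈ P.support := by
      have : z ∈ P.reverse.support := by
        rw [hq, Walk.support_cons]; exact List.mem_cons_of_mem _ q.start_mem_support
      rw [Walk.support_reverse] at this; exact List.mem_reverse.mp this
    have hzdesc : z ∈ descSet T root v := support_sub_desc hT hw hP z hzP
    have hsplit := dist_split hT hP hzP
    have hzw : T.dist z w = 1 := by rw [SimpleGraph.dist_comm]; exact adj_dist_one hz
    -- level of z
    have hwz : T.dist root w = T.dist root z + 1 := by
      rcases adj_lvl hT root hz with h2 | h2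
      · exfalso
        rw [mem_desc] at hzdesc hw
        have hvw : T.dist v w ≠ 0 := fun h0 => hwv ((dist_zero_iff hT).mp h0).symm
        omega
      · exact h2
    have hwroot : w ≠ root := by
      intro e; rw [e, lvl_root] at hwz; omega
    have e1 : x = par hT root w := eq_par hT root hwroot h (by omega)
    have e2 : z = par hT root w := eq_par hT root hwroot hz (by omega)
    rw [e1.trans e2.symm]; exact hzdesc

lemma degIn_congr {S S' : Finset V} {v : V} (h : ∀ x, T.Adj v x → (x ∈ S ↔ x ∈ S')) :
    degIn T S v = degIn T S' v := by
  unfold degIn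
  congr 1
  ext x
  simp only [Finset.mem_filter]
  constructor
  · rintro ⟨h1, h2⟩; exact ⟨(h x h2).mp h1, h2⟩
  · rintro ⟨h1, h2⟩; exact ⟨(h x h2).mpr h1, h2⟩

lemma degIn_le {S S' : Finset V} {v : V} (h : ∀ x, T.Adj v x → x ∈ S → x ∈ S') :
    degIn T S v ≤ degIn T S' v := by
  apply Finset.card_le_card
  intro x hx
  rw [Finset.mem_filter] at hx ⊢
  exact ⟨h x hx.2 hx.1, hx.2⟩

lemma one_le_degIn {S : Finset V} {v x : V} (hx : x ∈ S) (h : T.Adj v x) :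
    1 ≤ degIn T S v :=
  Finset.card_pos.mpr ⟨x, Finset.mem_filter.mpr ⟨hx, h⟩⟩

lemma two_le_degIn {S : Finset V} {v x y : V} (hx : x ∈ S) (hxa : T.Adj v x)
    (hy : y ∈ S) (hya : T.Adj v y) (hxy : x ≠ y) : 2 ≤ degIn T S v :=
  Finset.one_lt_card.mpr ⟨x, Finset.mem_filter.mpr ⟨hx, hxa⟩, y,
    Finset.mem_filter.mpr ⟨hy, hya⟩, hxy⟩

lemma three_le_degIn {S : Finset V} {v x y z : V} (hx : x ∈ S) (hxa : T.Adj v x)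
    (hy : y ∈ S) (hya : T.Adj v y) (hz : z ∈ S) (hza : T.Adj v z)
    (hxy : x ≠ y) (hxz : x ≠ z) (hyz : y ≠ z) : 3 ≤ degIn T S v := by
  have hsub : ({x, y, z} : Finset V) ⊆ S.filter (fun w => T.Adj v w) := by
    intro a ha
    simp only [Finset.mem_insert, Finset.mem_singleton] at ha
    rcases ha with rfl | rfl | rfl
    · exact Finset.mem_filter.mpr ⟨hx, hxa⟩
    · exact Finset.mem_filter.mpr ⟨hy, hya⟩
    · exact Finset.mem_filter.mpr ⟨hz, hza⟩
  have hcard : ({x, y, z} : Finset V).card = 3 := by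
    rw [Finset.card_insert_of_notMem (by simp [hxy, hxz]),
      Finset.card_insert_of_notMem (by simp [hyz]), Finset.card_singleton]
  calc 3 = ({x, y, z} : Finset V).card := hcard.symm
    _ ≤ _ := Finset.card_le_card hsub
  
lemma deg_split (hT : T.IsTree) {root : V} {S : Finset V} {v : V} (hv : v ≠ root)
    (hpar : par hT root v ∈ S) :
    degIn T S v = degIn T (S ∩ descSet T root v) v + 1 := by
  have hkey : S.filter (fun w => T.Adj v w) =
      insert (par hT root v) ((S ∩ descSet T root v).filter (fun w => T.Adj v w)) := by
    ext x
    simp only [Finset.mem_filter, Finset.mem_insert, Finset.mem_inter]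
    constructor
    · rintro ⟨hxS, hadj⟩
      rcases adj_lvl hT root hadj with h1 | h1
      · exact Or.inr ⟨⟨hxS, child_desc hT hadj h1⟩, hadj⟩
      · exact Or.inl (eq_par hT root hv hadj (by omega))
    · rintro (rfl | ⟨⟨h1, _⟩, h2⟩)
      · exact ⟨hpar, (par_spec hT root hv).1⟩
      · exact ⟨h1, h2⟩
  unfold degIn
  rw [hkey, Finset.card_insert_of_notMem]
  intro hmem
  rw [Finset.mem_filter, Finset.mem_inter] at hmem
  exact par_not_desc hT hv hmem.1.2

end Aux3
section AuxB
set_option linter.unusedSectionVars false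
set_option linter.unusedVariables false
open SimpleGraph Walk

variable {V : Type*} [Fintype V] [DecidableEq V] {T : SimpleGraph V} [DecidableRel T.Adj]

lemma dsi_succ (G : SimpleGraph V) [DecidableRel G.Adj] (rt : V) (A : Finset V) (k : ℕ) :
    downStemIter G rt A (k + 1) = (downStemIter G rt A k).filter
      (fun v => v = rt ∨ 1 < degIn G (downStemIter G rt A k) v) := rfl

lemma dsi_succ_subset (G : SimpleGraph V) [DecidableRel G.Adj] (rt : V) (A : Finset V) (k : ℕ) :
    downStemIter G rt A (k + 1) ⊆ downStemIter G rt A k := by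
  rw [dsi_succ]; exact Finset.filter_subset _ _

lemma dsi_mono (G : SimpleGraph V) [DecidableRel G.Adj] (rt : V) (A : Finset V) {k l : ℕ}
    (h : k ≤ l) : downStemIter G rt A l ⊆ downStemIter G rt A k := by
  induction l with
  | zero => rw [Nat.le_zero.mp h]
  | succ l ih =>
    rcases Nat.lt_or_ge k (l + 1) with h1 | h1
    · exact fun x hx => ih (Nat.lt_succ_iff.mp h1) (dsi_succ_subset G rt A l hx)
    · have : k = l + 1 := le_antisymm h h1
      rw [this]
  
lemma dsi_subset (G : SimpleGraph V) [DecidableRel G.Adj] (rt : V) (A : Finset V) (k : ℕ) :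
    downStemIter G rt A k ⊆ A :=
  dsi_mono G rt A (Nat.zero_le k)

lemma root_mem_dsi (G : SimpleGraph V) [DecidableRel G.Adj] {rt : V} {A : Finset V}
    (h : rt ∈ A) (k : ℕ) : rt ∈ downStemIter G rt A k := by
  induction k with
  | zero => exact h
  | succ k ih => rw [dsi_succ, Finset.mem_filter]; exact ⟨ih, Or.inl rfl⟩

lemma par_mem_dsi (hT : T.IsTree) (root : V) (k : ℕ) :
    ∀ v, v ∈ downStemIter T root Finset.univ k → v ≠ root →
      par hT root v ∈ downStemIter T root Finset.univ k := by
  induction k with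
  | zero => intro v _ _; exact Finset.mem_univ _
  | succ k ih =>
    intro v hv hvr
    have hvk : v ∈ downStemIter T root Finset.univ k := dsi_succ_subset _ _ _ _ hv
    have hpark : par hT root v ∈ downStemIter T root Finset.univ k := ih v hvk hvr
    rw [dsi_succ, Finset.mem_filter]
    refine ⟨hpark, ?_⟩
    by_cases hp : par hT root v = root
    · exact Or.inl hp
    · right
      have hparpark : par hT root (par hT root v) ∈ downStemIter T root Finset.univ k :=
        ih _ hpark hp
      have h1 := par_spec hT root hvr
      have h2 := par_spec hT root hp
      have hne : v ≠ par hT root (par hT root v) := by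
        intro e
        have : T.dist root v = T.dist root (par hT root (par hT root v)) := by rw [← e]
        omega
      have := two_le_degIn hvk (T.adj_symm h1.1) hparpark h2.1 hne
      omega

lemma dsi_inter_desc (hT : T.IsTree) (root : V) {r : ℕ} {v : V}
    (hv : v ∈ downStemIter T root Finset.univ r) :
    ∀ k, k ≤ r → downStemIter T root Finset.univ k ∩ descSet T root v =
      downStemIter T v (descSet T root v) k := by
  by_cases hvr : v = root
  · subst hvr
    intro k _
    rw [desc_root_eq_univ, Finset.inter_univ]
  intro k hk
  induction k with
  | zero =>
    show Finset.univ ∩ descSet T root v = descSet T root v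
    exact Finset.univ_inter _
  | succ k ih =>
    have ihk := ih (Nat.le_of_succ_le hk)
    ext w
    rw [dsi_succ, dsi_succ]
    simp only [Finset.mem_inter, Finset.mem_filter]
    have hdegeq : ∀ w', w' ∈ descSet T root v → w' ≠ v →
        degIn T (downStemIter T root Finset.univ k) w' =
        degIn T (downStemIter T v (descSet T root v) k) w' := by
      intro w' hw'desc hw'v
      rw [← ihk]
      apply degIn_congr
      intro x hadj
      simp only [Finset.mem_inter]
      exact ⟨fun hx => ⟨hx, desc_neighbor hT hw'desc hw'v hadj⟩, fun hx => hx.1⟩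
    constructor
    · rintro ⟨⟨hwAk, hcond⟩, hwdesc⟩
      have hwB : w ∈ downStemIter T v (descSet T root v) k := by
        rw [← ihk]; exact Finset.mem_inter.mpr ⟨hwAk, hwdesc⟩
      refine ⟨hwB, ?_⟩
      by_cases hwv : w = v
      · exact Or.inl hwv
      · right
        rcases hcond with rfl | hdeg
        · exact absurd hwdesc (root_not_desc hT hvr)
        · rw [← hdegeq w hwdesc hwv]; exact hdeg
    · rintro ⟨hwB, hcond⟩
      have hmem : w ∈ downStemIter T root Finset.univ k ∩ descSet T root v := by
        rw [ihk]; exact hwB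
      rw [Finset.mem_inter] at hmem
      obtain ⟨hwAk, hwdesc⟩ := hmem
      refine ⟨⟨hwAk, ?_⟩, hwdesc⟩
      by_cases hwv : w = v
      · subst hwv
        have := dsi_mono T root Finset.univ hk hv
        rw [dsi_succ, Finset.mem_filter] at this
        exact this.2
      · rcases hcond with rfl | hdeg
        · exact absurd rfl hwv
        · right; rw [hdegeq w hwdesc hwv]; exact hdeg
  
end AuxB
section AuxB2
set_option linter.unusedSectionVars false
set_option linter.unusedVariables false
open SimpleGraph Walk

variable {V : Type*} [Fintype V] [DecidableEq V] {T : SimpleGraph V} [DecidableRel T.Adj]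

lemma dsB_claim (hT : T.IsTree) (root : V) {v : V} (hvr : v ≠ root) :
    ∀ k, (∀ w ∈ downStemIter T v (descSet T root v) k, w ≠ v →
            w ∈ downStemIter T root Finset.univ k) ∧
         (1 ≤ degIn T (downStemIter T v (descSet T root v) k) v →
            v ∈ downStemIter T root Finset.univ k) := by
  intro k
  induction k with
  | zero => exact ⟨fun w _ _ => Finset.mem_univ _, fun _ => Finset.mem_univ _⟩
  | succ k ih =>
    have part1 : ∀ w ∈ downStemIter T v (descSet T root v) (k+1), w ≠ v →
        w ∈ downStemIter T root Finset.univ (k+1) := by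
      intro w hw hwv
      rw [dsi_succ, Finset.mem_filter] at hw
      obtain ⟨hwB, hcond⟩ := hw
      have hdeg2 : 1 < degIn T (downStemIter T v (descSet T root v) k) w := by
        rcases hcond with rfl | h
        · exact absurd rfl hwv
        · exact h
      have htrans : ∀ x, T.Adj w x → x ∈ downStemIter T v (descSet T root v) k →
          x ∈ downStemIter T root Finset.univ k := by
        intro x hadj hx
        by_cases hxv : x = v
        · subst hxv
          exact ih.2 (one_le_degIn hwB (T.adj_symm hadj))
        · exact ih.1 x hx hxv
      have hle := degIn_le htrans
      rw [dsi_succ, Finset.mem_filter]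
      exact ⟨ih.1 w hwB hwv, Or.inr (lt_of_lt_of_le hdeg2 hle)⟩
    refine ⟨part1, ?_⟩
    intro hdeg
    obtain ⟨w, hwmem⟩ := Finset.card_pos.mp hdeg
    rw [Finset.mem_filter] at hwmem
    obtain ⟨hwB1, hadj⟩ := hwmem
    have hwv : w ≠ v := hadj.ne'
    have hwA1 : w ∈ downStemIter T root Finset.univ (k+1) := part1 w hwB1 hwv
    have hwBk : w ∈ downStemIter T v (descSet T root v) k := dsi_succ_subset _ _ _ _ hwB1
    have hvAk : v ∈ downStemIter T root Finset.univ k := ih.2 (one_le_degIn hwBk hadj)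
    rw [dsi_succ, Finset.mem_filter]
    refine ⟨hvAk, Or.inr ?_⟩
    have hpar := par_spec hT root hvr
    have hparAk := par_mem_dsi hT root k v hvAk hvr
    have hwAk : w ∈ downStemIter T root Finset.univ k := dsi_succ_subset _ _ _ _ hwA1
    have hwdesc : w ∈ descSet T root v := dsi_subset _ _ _ _ hwBk
    have hne : w ≠ par hT root v := by
      intro e
      have := lvl_le_of_desc hwdesc
      rw [e] at this
      omega
    have := two_le_degIn hwAk hadj hparAk hpar.1 hne
    omega

lemma mem_dsA_of_degB (hT : T.IsTree) (root : V) {r : ℕ} {v : V} (hvr : v ≠ root)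
    (hdeg : 1 ≤ degIn T (downStemIter T v (descSet T root v) r) v) :
    v ∈ downStemIter T root Finset.univ r :=
  (dsB_claim hT root hvr r).2 hdeg

end AuxB2
section AuxC
set_option linter.unusedSectionVars false
set_option linter.unusedVariables false
open SimpleGraph Walk

variable {V : Type*} [Fintype V] [DecidableEq V] {T : SimpleGraph V} [DecidableRel T.Adj]

/-- `takeUntil` and `dropUntil` of a path share only the split vertex. -/
lemma takeUntil_disj {v x u : V} {p : T.Walk v x} (hp : p.IsPath) (h : u ∈ p.support) :
    ∀ z ∈ (p.takeUntil u h).support, z ∈ (p.dropUntil u h).support → z = u := by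
  intro z hz1 hz2
  have hnd := hp
  rw [← take_spec p h] at hnd
  rw [Walk.isPath_def, Walk.support_append, List.nodup_append] at hnd
  have hz2' : z = u ∨ z ∈ (p.dropUntil u h).support.tail := by
    rw [Walk.support_eq_cons (p.dropUntil u h)] at hz2
    exact List.mem_cons.mp hz2
  rcases hz2' with h' | h'
  · exact h'
  · exact absurd rfl (hnd.2.2 z hz1 z h')

lemma degIn_transfer (hT : T.IsTree) (root : V) {A : Finset V} {v w : V}
    (hw : w ∈ descSet T root v) (hwv : w ≠ v) :
    degIn T A w = degIn T (A ∩ descSet T root v) w := by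
  apply degIn_congr
  intro x hadj
  simp only [Finset.mem_inter]
  exact ⟨fun hx => ⟨hx, desc_neighbor hT hw hwv hadj⟩, fun hx => hx.1⟩

lemma ne_of_pos_path {v u : V} {p : T.Walk v u} (hp : p.IsPath) (hl : 0 < p.length) :
    v ≠ u := by
  rintro rfl
  rw [Walk.isPath_iff_eq_nil] at hp
  rw [hp] at hl
  simp at hl

/-- Direction 1: a non-root vertex satisfying `P^E_r` is an exterior major vertex. -/
lemma extMajor_of_NEprop (hT : T.IsTree) (root : V) (r : ℕ) {v : V} (hvr : v ≠ root)
    (hne : NEprop T root r v) :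
    IsExtMajorIn T (downStemIter T root Finset.univ r) v := by
  obtain ⟨hdeg2, u, p, hp, hlen, hsupp, hu1, hint⟩ := hne
  have hvA : v ∈ downStemIter T root Finset.univ r :=
    mem_dsA_of_degB hT root hvr (by omega)
  have hBA : downStemIter T v (descSet T root v) r =
      downStemIter T root Finset.univ r ∩ descSet T root v :=
    (dsi_inter_desc hT root hvA r le_rfl).symm
  have hpar : par hT root v ∈ downStemIter T root Finset.univ r :=
    par_mem_dsi hT root r v hvA hvr
  have hdsplit := deg_split hT (S := downStemIter T root Finset.univ r) hvr hpar
  rw [← hBA] at hdsplit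
  have hsuppA : ∀ w ∈ p.support, w ∈ downStemIter T root Finset.univ r := by
    intro w hw
    have := hsupp w hw
    rw [hBA, Finset.mem_inter] at this
    exact this.1
  have hsuppD : ∀ w ∈ p.support, w ∈ descSet T root v := by
    intro w hw
    have := hsupp w hw
    rw [hBA, Finset.mem_inter] at this
    exact this.2
  have hvu : v ≠ u := ne_of_pos_path hp hlen
  refine ⟨hvA, by omega, u, p, hp, hlen, hsuppA, ?_, ?_⟩
  · rw [degIn_transfer hT root (hsuppD u p.end_mem_support) (Ne.symm hvu), ← hBA]
    exact hu1
  · intro w hw hwv hwu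
    rw [degIn_transfer hT root (hsuppD w hw) hwv, ← hBA]
    exact hint w hw hwv hwu

/-- If the root is an exterior major vertex then it satisfies `P^E_r`. -/
lemma NEprop_of_extMajor_root (hT : T.IsTree) (root : V) (r : ℕ)
    (hex : IsExtMajorIn T (downStemIter T root Finset.univ r) root) :
    NEprop T root r root := by
  obtain ⟨hA, hdeg, u, hlp⟩ := hex
  unfold NEprop
  rw [desc_root_eq_univ]
  exact ⟨by omega, u, hlp⟩

/-- Walking from a vertex of degree 2 upwards, staying in `A`, we must reach the root. -/
lemma up_to_root (hT : T.IsTree) (root : V) {A : Finset V}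
    (hparA : ∀ w ∈ A, w ≠ root → par hT root w ∈ A) {u : V} :
    ∀ {s : V} (q : T.Walk s u), q.IsPath → (∀ w ∈ q.support, w ∈ A) →
      degIn T A u = 1 → (∀ w ∈ q.support, w ≠ u → degIn T A w = 2) →
      ∀ z, T.Adj s z → z ∈ A → z ∉ q.support → T.dist root z = T.dist root s + 1 →
      root ∈ q.support := by
  intro s q
  induction q with
  | nil =>
    rename_i x
    intro hq hA hu1 hint z hadj hzA hznot hzl
    by_cases hsr : x = root
    · subst hsr; exact Walk.start_mem_support _
    · exfalso
      have hsA : x ∈ A := hA x (Walk.start_mem_support _)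
      have hpar := par_spec hT root hsr
      have hzpar : z ≠ par hT root x := by
        intro e; rw [e] at hzl; omega
      have := two_le_degIn hzA hadj (hparA x hsA hsr) hpar.1 hzpar
      omega
  | @cons s w₀ y h q' ih =>
    intro hq hA hu1 hint z hadj hzA hznot hzl
    by_cases hsr : s = root
    · subst hsr; exact Walk.start_mem_support _
    have hsnq : s ∉ q'.support := ((Walk.cons_isPath_iff _ _).mp hq).2
    have hsu : s ≠ y := by
      intro e; rw [e] at hsnq; exact hsnq q'.end_mem_support
    have hdegs : degIn T A s = 2 := hint s (Walk.start_mem_support _) hsu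
    have hw₀s : w₀ ∈ (Walk.cons h q').support := by
      rw [Walk.support_cons]; exact List.mem_cons_of_mem _ q'.start_mem_support
    rcases adj_lvl hT root h with hlv | hlv
    · -- w₀ is a child of s : contradiction with degree 2
      exfalso
      have hsA : s ∈ A := hA s (Walk.start_mem_support _)
      have hpar := par_spec hT root hsr
      have h1 : z ≠ w₀ := fun e => hznot (e ▸ hw₀s)
      have h2 : z ≠ par hT root s := by intro e; rw [e] at hzl; omega
      have h3 : w₀ ≠ par hT root s := by
        intro e; rw [e] at hlv; omega
      have := three_le_degIn hzA hadj (hA w₀ hw₀s) h (hparA s hsA hsr) hpar.1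
        h1 h2 h3
      omega
    · -- w₀ is the parent of s; recurse
      have hres : root ∈ q'.support := by
        refine ih hq.of_cons (fun w hw => hA w (by
          rw [Walk.support_cons]; exact List.mem_cons_of_mem _ hw)) hu1
          (fun w hw hwu => hint w (by
            rw [Walk.support_cons]; exact List.mem_cons_of_mem _ hw) hwu)
          s (T.adj_symm h) (hA s (Walk.start_mem_support _)) hsnq hlv
      rw [Walk.support_cons]
      exact List.mem_cons_of_mem _ hres

end AuxC
section AuxD
set_option linter.unusedSectionVars false
set_option linter.unusedVariables false
open SimpleGraph Walk

variable {V : Type*} [Fintype V] [DecidableEq V] {T : SimpleGraph V} [DecidableRel T.Adj]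

/-- Data extracted from an exterior major vertex that does not satisfy `P^E_r`:
its leaf path must ascend through the root. -/
lemma d_data (hT : T.IsTree) (root : V) (r : ℕ) {v : V}
    (hex : IsExtMajorIn T (downStemIter T root Finset.univ r) v)
    (hne : ¬ NEprop T root r v) (hvr : v ≠ root) :
    ∃ (u : V) (p : T.Walk v u), p.IsPath ∧ 0 < p.length ∧
      (∀ w ∈ p.support, w ∈ downStemIter T root Finset.univ r) ∧
      degIn T (downStemIter T root Finset.univ r) u = 1 ∧
      (∀ w ∈ p.support, w ≠ v → w ≠ u →
        degIn T (downStemIter T root Finset.univ r) w = 2) ∧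
      root ∈ p.support := by
  obtain ⟨hvA, hdeg3, u, p, hp, hlen, hsupp, hu1, hint⟩ := hex
  set A := downStemIter T root Finset.univ r with hAdef
  have hBA : downStemIter T v (descSet T root v) r = A ∩ descSet T root v :=
    (dsi_inter_desc hT root hvA r le_rfl).symm
  have hpar : par hT root v ∈ A := par_mem_dsi hT root r v hvA hvr
  have hdsplit := deg_split hT (S := A) hvr hpar
  have hdegB2 : 2 ≤ degIn T (downStemIter T v (descSet T root v) r) v := by
    rw [hBA]; omega
  have hnolp : ∀ u', ¬ IsLeafPathIn T (downStemIter T v (descSet T root v) r) v u' :=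
    fun u' hlp => hne ⟨hdegB2, u', hlp⟩
  have hvu : v ≠ u := ne_of_pos_path hp hlen
  -- the end of the leaf path cannot be a descendant of v
  have hu_notdesc : u ∉ descSet T root v := by
    intro hud
    apply hnolp u
    have hsuppD : ∀ w ∈ p.support, w ∈ descSet T root v := support_sub_desc hT hud hp
    refine ⟨p, hp, hlen, ?_, ?_, ?_⟩
    · intro w hw
      rw [hBA, Finset.mem_inter]
      exact ⟨hsupp w hw, hsuppD w hw⟩
    · rw [hBA, ← degIn_transfer hT root hud (Ne.symm hvu)]
      exact hu1
    · intro w hw hwv hwu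
      rw [hBA, ← degIn_transfer hT root (hsuppD w hw) hwv]
      exact hint w hw hwv hwu
  obtain ⟨w₀, hadj, q, hpq⟩ := Walk.exists_eq_cons_of_ne hvu p
  have hqpath : q.IsPath := by
    have := hp; rw [hpq] at this; exact this.of_cons
  have hvnq : v ∉ q.support := by
    have := hp; rw [hpq] at this
    exact ((Walk.cons_isPath_iff _ _).mp this).2
  have hlvl : T.dist root v = T.dist root w₀ + 1 := by
    rcases adj_lvl hT root hadj with hl | hl
    · exfalso
      apply hu_notdesc
      have hdall : AllDown T root p := by
        rw [hpq, allDown_cons]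
        exact ⟨hl, allDown_aux hT root q hqpath v hadj hl hvnq⟩
      exact allDown_desc hT hdall
    · exact hl
  have hrootq : root ∈ q.support := by
    refine up_to_root hT root (fun w hw hwr => par_mem_dsi hT root r w hw hwr) q hqpath
      ?_ hu1 ?_ v (T.adj_symm hadj) hvA hvnq hlvl
    · intro w hw
      apply hsupp
      rw [hpq, Walk.support_cons]
      exact List.mem_cons_of_mem _ hw
    · intro w hw hwu
      have hwv : w ≠ v := fun e => hvnq (e ▸ hw)
      exact hint w (by rw [hpq, Walk.support_cons]; exact List.mem_cons_of_mem _ hw) hwv hwu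
  exact ⟨u, p, hp, hlen, hsupp, hu1, hint, by
    rw [hpq, Walk.support_cons]; exact List.mem_cons_of_mem _ hrootq⟩

end AuxD
section AuxE
set_option linter.unusedSectionVars false
set_option linter.unusedVariables false
open SimpleGraph Walk

variable {V : Type*} [Fintype V] [DecidableEq V] {T : SimpleGraph V} [DecidableRel T.Adj]

lemma up_path (hT : T.IsTree) (root : V) {A : Finset V} {v u : V} {p : T.Walk v u}
    (hp : p.IsPath) (hsupp : ∀ w ∈ p.support, w ∈ A)
    (hint : ∀ w ∈ p.support, w ≠ v → w ≠ u → degIn T A w = 2)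
    (hroot : root ∈ p.support) (hvr : v ≠ root) (hru : root ≠ u) :
    ∃ Q : T.Walk root v, Q.IsPath ∧ (∀ w ∈ Q.support, w ∈ A) ∧
      (∀ w ∈ Q.support, w ≠ root → w ≠ v → degIn T A w = 2) ∧
      (∀ z ∈ Q.support, z ≠ root → z ∉ (p.dropUntil root hroot).support) := by
  refine ⟨(p.takeUntil root hroot).reverse, (hp.takeUntil hroot).reverse, ?_, ?_, ?_⟩
  · intro w hw
    rw [Walk.support_reverse, List.mem_reverse] at hw
    exact hsupp w (Walk.support_takeUntil_subset p hroot hw)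
  · intro w hw hwr hwv
    rw [Walk.support_reverse, List.mem_reverse] at hw
    have hwu : w ≠ u := by
      intro e
      subst e
      exact hwr (takeUntil_disj hp hroot w hw (p.dropUntil root hroot).end_mem_support)
    exact hint w (Walk.support_takeUntil_subset p hroot hw) hwv hwu
  · intro z hz hzr hzdrop
    rw [Walk.support_reverse, List.mem_reverse] at hz
    exact hzr (takeUntil_disj hp hroot z hz hzdrop)

lemma d_unique (hT : T.IsTree) (root : V) (r : ℕ) {v₁ v₂ u₁ u₂ : V}
    {p₁ : T.Walk v₁ u₁} {p₂ : T.Walk v₂ u₂}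
    (hvr₁ : v₁ ≠ root) (hvr₂ : v₂ ≠ root)
    (hdeg₁ : 3 ≤ degIn T (downStemIter T root Finset.univ r) v₁)
    (hdeg₂ : 3 ≤ degIn T (downStemIter T root Finset.univ r) v₂)
    (hp₁ : p₁.IsPath) (hp₂ : p₂.IsPath)
    (hsupp₁ : ∀ w ∈ p₁.support, w ∈ downStemIter T root Finset.univ r)
    (hsupp₂ : ∀ w ∈ p₂.support, w ∈ downStemIter T root Finset.univ r)
    (hu₁ : degIn T (downStemIter T root Finset.univ r) u₁ = 1)
    (hu₂ : degIn T (downStemIter T root Finset.univ r) u₂ = 1)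
    (hint₁ : ∀ w ∈ p₁.support, w ≠ v₁ → w ≠ u₁ →
      degIn T (downStemIter T root Finset.univ r) w = 2)
    (hint₂ : ∀ w ∈ p₂.support, w ≠ v₂ → w ≠ u₂ →
      degIn T (downStemIter T root Finset.univ r) w = 2)
    (hroot₁ : root ∈ p₁.support) (hroot₂ : root ∈ p₂.support) :
    v₁ = v₂ := by
  by_contra hvne
  set A := downStemIter T root Finset.univ r with hAdef
  have hparA : ∀ w ∈ A, w ≠ root → par hT root w ∈ A :=
    fun w hw hwr => par_mem_dsi hT root r w hw hwr
  -- the root cannot be the leaf end of either path unless its degree is 1;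
  -- first get the two ascending paths
  have hv₁A : v₁ ∈ A := hsupp₁ v₁ p₁.start_mem_support
  have hv₂A : v₂ ∈ A := hsupp₂ v₂ p₂.start_mem_support
  have hru₁ : root ≠ u₁ ∨ degIn T A root = 1 := by
    by_cases h : root = u₁
    · right; rw [h]; exact hu₁
    · left; exact h
  -- build Q₁, Q₂ (need root ≠ u to use up_path; handle root = u case by degree)
  -- We first treat the degenerate cases through a common framework below.
  -- Case analysis on root = u₁ / root = u₂ is folded in: we show root ≠ uᵢ is needed
  -- only for the fourth component; but up_path requires it, so handle separately.
  -- Instead we note: we will derive 2 ≤ degIn T A root in the meet case, which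
  -- contradicts degIn T A root = 1. To structure this, we do the meets first using
  -- takeUntil-based paths that do not need root ≠ u.
  have hQ₁ : ∃ Q : T.Walk root v₁, Q.IsPath ∧ (∀ w ∈ Q.support, w ∈ A) ∧
      (∀ w ∈ Q.support, w ≠ root → w ≠ v₁ → degIn T A w = 2) ∧
      (∀ z ∈ Q.support, z ≠ root → z ∉ (p₁.dropUntil root hroot₁).support) := by
    by_cases h : root = u₁
    · -- root = u₁ : takeUntil root = whole path basically; still fine:
      refine ⟨(p₁.takeUntil root hroot₁).reverse, (hp₁.takeUntil hroot₁).reverse, ?_, ?_, ?_⟩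
      · intro w hw
        rw [Walk.support_reverse, List.mem_reverse] at hw
        exact hsupp₁ w (Walk.support_takeUntil_subset p₁ hroot₁ hw)
      · intro w hw hwr hwv
        rw [Walk.support_reverse, List.mem_reverse] at hw
        exact hint₁ w (Walk.support_takeUntil_subset p₁ hroot₁ hw) hwv (h ▸ hwr)
      · intro z hz hzr hzdrop
        rw [Walk.support_reverse, List.mem_reverse] at hz
        exact hzr (takeUntil_disj hp₁ hroot₁ z hz hzdrop)
    · exact up_path hT root hp₁ hsupp₁ hint₁ hroot₁ hvr₁ h
  have hQ₂ : ∃ Q : T.Walk root v₂, Q.IsPath ∧ (∀ w ∈ Q.support, w ∈ A) ∧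
      (∀ w ∈ Q.support, w ≠ root → w ≠ v₂ → degIn T A w = 2) ∧
      (∀ z ∈ Q.support, z ≠ root → z ∉ (p₂.dropUntil root hroot₂).support) := by
    by_cases h : root = u₂
    · refine ⟨(p₂.takeUntil root hroot₂).reverse, (hp₂.takeUntil hroot₂).reverse, ?_, ?_, ?_⟩
      · intro w hw
        rw [Walk.support_reverse, List.mem_reverse] at hw
        exact hsupp₂ w (Walk.support_takeUntil_subset p₂ hroot₂ hw)
      · intro w hw hwr hwv
        rw [Walk.support_reverse, List.mem_reverse] at hw
        exact hint₂ w (Walk.support_takeUntil_subset p₂ hroot₂ hw) hwv (h ▸ hwr)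
      · intro z hz hzr hzdrop
        rw [Walk.support_reverse, List.mem_reverse] at hz
        exact hzr (takeUntil_disj hp₂ hroot₂ z hz hzdrop)
    · exact up_path hT root hp₂ hsupp₂ hint₂ hroot₂ hvr₂ h
  obtain ⟨Q₁, hQ₁p, hQ₁A, hQ₁int, hQ₁disj⟩ := hQ₁
  obtain ⟨Q₂, hQ₂p, hQ₂A, hQ₂int, hQ₂disj⟩ := hQ₂
  have hAD₁ : AllDown T root Q₁ := allDown_of_root hT Q₁ hQ₁p
  have hAD₂ : AllDown T root Q₂ := allDown_of_root hT Q₂ hQ₂p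
  rcases meet root v₂ Q₁ hQ₁p Q₂ hQ₂p with hm | hm | ⟨b, c₁, c₂, hb1, hb2, P₂, Q₂', hnec,
      hbP, hbQ, hc1p, hc2p, hs1, hs2, hd1i, hd2i⟩
  · -- v₁ ∈ Q₂.support
    have := hQ₂int v₁ hm hvr₁ hvne
    omega
  · have := hQ₁int v₂ hm hvr₂ (Ne.symm hvne)
    omega
  obtain ⟨hc₁lvl, hP₂AD⟩ := hd1i hAD₁
  obtain ⟨hc₂lvl, hQ₂'AD⟩ := hd2i hAD₂
  have hc₁Q : c₁ ∈ Q₁.support := hs1 (by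
    rw [Walk.support_cons]; exact List.mem_cons_of_mem _ P₂.start_mem_support)
  have hc₂Q : c₂ ∈ Q₂.support := hs2 (by
    rw [Walk.support_cons]; exact List.mem_cons_of_mem _ Q₂'.start_mem_support)
  have hc₁A : c₁ ∈ A := hQ₁A c₁ hc₁Q
  have hc₂A : c₂ ∈ A := hQ₂A c₂ hc₂Q
  by_cases hbr : b = root
  case neg =>
    -- interior divergence: contradiction
    have hbv₁ : b ≠ v₁ := by
      intro e; subst e
      have := hQ₂int b hbQ hvr₁ hvne
      omega
    have hbv₂ : b ≠ v₂ := by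
      intro e; subst e
      have := hQ₁int b hbP hvr₂ (Ne.symm hvne)
      omega
    have hbA : b ∈ A := hQ₁A b hbP
    have hpar := par_spec hT root hbr
    have h1 : c₁ ≠ par hT root b := by intro e; rw [e] at hc₁lvl; omega
    have h2 : c₂ ≠ par hT root b := by intro e; rw [e] at hc₂lvl; omega
    have hdeg3 := three_le_degIn hc₁A hb1 hc₂A hb2 (hparA b hbA hbr) hpar.1 hnec h1 h2
    have := hQ₁int b hbP hbr hbv₁
    omega
  case pos =>
  subst hbr
  rw [lvl_root] at hc₁lvl hc₂lvl
  -- the b has degree exactly 2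
  have hrootA : b ∈ A := root_mem_dsi T (Finset.mem_univ b) r
  have hdegroot2 : 2 ≤ degIn T A b := two_le_degIn hc₁A hb1 hc₂A hb2 hnec
  have hru₁' : b ≠ u₁ := by
    intro e; rw [← e] at hu₁; omega
  have hdroot : degIn T A b = 2 := by
    have := hint₁ b hroot₁ (Ne.symm hvr₁) hru₁'
    omega
  -- the tail of p₁ after the b
  have ht₁p : (p₁.dropUntil b hroot₁).IsPath := hp₁.dropUntil hroot₁
  obtain ⟨nb, hnbadj, t₂, ht⟩ := Walk.exists_eq_cons_of_ne hru₁' (p₁.dropUntil b hroot₁)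
  have hnbdrop : nb ∈ (p₁.dropUntil b hroot₁).support := by
    rw [ht, Walk.support_cons]; exact List.mem_cons_of_mem _ t₂.start_mem_support
  have hnbA : nb ∈ A := hsupp₁ nb (Walk.support_dropUntil_subset p₁ hroot₁ hnbdrop)
  have hc₁r : c₁ ≠ b := by intro e; rw [e, lvl_root] at hc₁lvl; omega
  have hnbc₁ : nb ≠ c₁ := by
    intro e; subst e
    exact hQ₁disj nb hc₁Q hc₁r hnbdrop
  -- b's two neighbours in A are exactly c₁ and c₂
  have hnb : nb = c₂ := by
    have hsub : ({c₁, c₂} : Finset V) ⊆ A.filter (fun w => T.Adj b w) := by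
      intro a ha
      simp only [Finset.mem_insert, Finset.mem_singleton] at ha
      rcases ha with rfl | rfl
      · exact Finset.mem_filter.mpr ⟨hc₁A, hb1⟩
      · exact Finset.mem_filter.mpr ⟨hc₂A, hb2⟩
    have hcard : ({c₁, c₂} : Finset V).card = 2 := by
      rw [Finset.card_insert_of_notMem (by simp [hnec]), Finset.card_singleton]
    have hEq : ({c₁, c₂} : Finset V) = A.filter (fun w => T.Adj b w) :=
      Finset.eq_of_subset_of_card_le hsub (by
        show degIn T A b ≤ _
        rw [hdroot, hcard])
    have hnbf : nb ∈ A.filter (fun w => T.Adj b w) :=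
      Finset.mem_filter.mpr ⟨hnbA, hnbadj⟩
    rw [← hEq] at hnbf
    simp only [Finset.mem_insert, Finset.mem_singleton] at hnbf
    rcases hnbf with e | e
    · exact absurd e hnbc₁
    · exact e
  subst hnb
  -- t₂ is a path from nb = c₂ to u₁; second meet with Q₂'
  have ht₂p : t₂.IsPath := by
    have := ht₁p; rw [ht] at this; exact this.of_cons
  have hQ₂'p : Q₂'.IsPath := hc2p.of_cons
  have ht₂AD : AllDown T b t₂ := by
    have h0 : AllDown T b (p₁.dropUntil b hroot₁) :=
      allDown_of_root hT _ ht₁p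
    rw [ht, allDown_cons] at h0
    exact h0.2
  have ht₂sub : ∀ w ∈ t₂.support, w ∈ (p₁.dropUntil b hroot₁).support := by
    intro w hw
    rw [ht, Walk.support_cons]
    exact List.mem_cons_of_mem _ hw
  have ht₂p₁ : ∀ w ∈ t₂.support, w ∈ p₁.support :=
    fun w hw => Walk.support_dropUntil_subset p₁ hroot₁ (ht₂sub w hw)
  have hQ₂'sub : ∀ w ∈ Q₂'.support, w ∈ Q₂.support := by
    intro w hw
    exact hs2 (by rw [Walk.support_cons]; exact List.mem_cons_of_mem _ hw)
  rcases meet b v₂ t₂ ht₂p Q₂' hQ₂'p with hm' | hm' | ⟨b', c₁', c₂', hb1', hb2', P₂'',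
      Q₂'', hnec', hbP', hbQ', hc1p', hc2p', hs1', hs2', hd1i', hd2i'⟩
  · -- u₁ ∈ Q₂'.support
    have hmem : u₁ ∈ Q₂.support := hQ₂'sub u₁ hm'
    have h1 : u₁ ≠ b := Ne.symm hru₁'
    have h2 : u₁ ≠ v₂ := by intro e; rw [e] at hu₁; omega
    have := hQ₂int u₁ hmem h1 h2
    omega
  · -- v₂ ∈ t₂.support
    have hmem : v₂ ∈ p₁.support := ht₂p₁ v₂ hm'
    have h2 : v₂ ≠ u₁ := by intro e; rw [e] at hdeg₂; omega
    have := hint₁ v₂ hmem (Ne.symm hvne) h2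
    omega
  · obtain ⟨hc₁'lvl, _⟩ := hd1i' ht₂AD
    obtain ⟨hc₂'lvl, _⟩ := hd2i' hQ₂'AD
    have hb'r : b' ≠ b := by
      intro e
      have := allDown_lvl_le Q₂' hQ₂'AD b' hbQ'
      rw [e, lvl_root] at this
      omega
    have hb'A : b' ∈ A := hsupp₁ b'
      (Walk.support_dropUntil_subset p₁ hroot₁ (ht₂sub b' hbP'))
    have hc₁'t : c₁' ∈ t₂.support := hs1' (by
      rw [Walk.support_cons]; exact List.mem_cons_of_mem _ P₂''.start_mem_support)
    have hc₂'Q : c₂' ∈ Q₂'.support := hs2' (by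
      rw [Walk.support_cons]; exact List.mem_cons_of_mem _ Q₂''.start_mem_support)
    have hc₁'A : c₁' ∈ A := hsupp₁ c₁'
      (Walk.support_dropUntil_subset p₁ hroot₁ (ht₂sub c₁' hc₁'t))
    have hc₂'A : c₂' ∈ A := hQ₂A c₂' (hQ₂'sub c₂' hc₂'Q)
    have hpar := par_spec hT b hb'r
    have h1 : c₁' ≠ par hT b b' := by intro e; rw [e] at hc₁'lvl; omega
    have h2 : c₂' ≠ par hT b b' := by intro e; rw [e] at hc₂'lvl; omega
    have hdeg3' := three_le_degIn hc₁'A hb1' hc₂'A hb2' (hparA b' hb'A hb'r) hpar.1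
      hnec' h1 h2
    have hb'p₁ : b' ∈ p₁.support := ht₂p₁ b' hbP'
    have hb'v₁ : b' ≠ v₁ := by
      intro e; subst e
      exact hQ₁disj b' Q₁.end_mem_support hvr₁ (ht₂sub b' hbP')
    have hb'u₁ : b' ≠ u₁ := by intro e; rw [e] at hdeg3'; omega
    have := hint₁ b' hb'p₁ hb'v₁ hb'u₁
    omega

end AuxE
/-- For a finite rooted tree `T` and nonnegative integer `r`,
`ex(Down-Stem_r(T)) - N^E_r(T) ∈ {-1, 0, +1}`, where `ex(H)` is the number of exterior
major vertices of `H`. -/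
theorem stmt_14 {V : Type*} [Fintype V] [DecidableEq V] (T : SimpleGraph V)
    [DecidableRel T.Adj] (hT : T.IsTree) (root : V) (r : ℕ) :
    (exIn T (downStemIter T root Finset.univ r) : ℤ) - (NE T root r : ℤ) ∈
      ({-1, 0, 1} : Set ℤ) := by
  classical
  set A := downStemIter T root Finset.univ r with hA
  set Sex : Set V := {v | IsExtMajorIn T A v} with hSex
  set Sne : Set V := {v | NEprop T root r v} with hSne
  have hco : exIn T A = Sex.ncard := rfl
  have hnNE : NE T root r = Sne.ncard := rfl
  have hdiff_ne : Sne \ Sex ⊆ {root} := by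
    rintro v ⟨hv1, hv2⟩
    by_contra hvr
    rw [Set.mem_singleton_iff] at hvr
    exact hv2 (extMajor_of_NEprop hT root r hvr hv1)
  have hdiff_ex_sub : ∀ v ∈ Sex \ Sne, v ≠ root := by
    rintro v ⟨hv1, hv2⟩ hv
    rw [hv] at hv1 hv2
    exact hv2 (NEprop_of_extMajor_root hT root r hv1)
  have hsub : ∀ v₁ ∈ Sex \ Sne, ∀ v₂ ∈ Sex \ Sne, v₁ = v₂ := by
    intro v₁ h1 v₂ h2
    obtain ⟨h1e, h1n⟩ := h1
    obtain ⟨h2e, h2n⟩ := h2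
    have hvr₁ : v₁ ≠ root := hdiff_ex_sub v₁ ⟨h1e, h1n⟩
    have hvr₂ : v₂ ≠ root := hdiff_ex_sub v₂ ⟨h2e, h2n⟩
    obtain ⟨u₁, p₁, hp₁, hl₁, hs₁, hu₁, hi₁, hr₁⟩ := d_data hT root r h1e h1n hvr₁
    obtain ⟨u₂, p₂, hp₂, hl₂, hs₂, hu₂, hi₂, hr₂⟩ := d_data hT root r h2e h2n hvr₂
    exact d_unique hT root r hvr₁ hvr₂ h1e.2.1 h2e.2.1 hp₁ hp₂ hs₁ hs₂ hu₁ hu₂ hi₁ hi₂ hr₁ hr₂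
  have e1 : (Sex ∩ Sne).ncard + (Sex \ Sne).ncard = Sex.ncard :=
    Set.ncard_inter_add_ncard_diff_eq_ncard Sex Sne (Set.toFinite _)
  have e2 : (Sne ∩ Sex).ncard + (Sne \ Sex).ncard = Sne.ncard :=
    Set.ncard_inter_add_ncard_diff_eq_ncard Sne Sex (Set.toFinite _)
  have e3 : Sne ∩ Sex = Sex ∩ Sne := Set.inter_comm _ _
  rw [e3] at e2
  have hd1 : (Sex \ Sne).ncard ≤ 1 := by
    rw [Set.ncard_le_one_iff (Set.toFinite _)]
    intro a b ha hb
    exact hsub a ha b hb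
  have hd2 : (Sne \ Sex).ncard ≤ 1 := by
    have := Set.ncard_le_ncard hdiff_ne (Set.toFinite _)
    simpa using this
  rw [hco, hnNE]
  simp only [Set.mem_insert_iff, Set.mem_singleton_iff]
  omega
end

section
/- Let T be a finite rooted tree and r a nonnegative integer, with the convention that if the root is removed by a stemming iteration, the root assignment moves to its unique remaining neighbor. Then ex(Stem_r(T)) − ex(Down-Stem_r(T)) ∈ {−1, 0}, where ex(H) denotes the number of exterior major vertices of a graph H. -/
open SimpleGraph

set_option linter.unusedSectionVars false

section Aux
variable {V : Type*} [Fintype V] [DecidableEq V] {T : SimpleGraph V} [DecidableRel T.Adj]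
  {root : V}

lemma degIn_mono {A B : Finset V} (h : A ⊆ B) (v : V) : degIn T A v ≤ degIn T B v :=
  Finset.card_le_card (Finset.filter_subset_filter _ h)

/-- Tongue condition: `w` is the extra path hanging at the root, `att` its attachment. -/
structure Tng (T : SimpleGraph V) [DecidableRel T.Adj] (S : Finset V) {h : V}
    (w : T.Walk h root) (att : Option V) : Prop where
  path : w.IsPath
  disj : ∀ x ∈ w.support, x ∉ S
  adjS : ∀ x ∈ w.support, ∀ y ∈ S, T.Adj x y → x = h ∧ att = some y
  attm : ∀ a, att = some a → a ∈ S ∧ T.Adj h a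

variable {S D : Finset V} {h : V} {w : T.Walk h root} {att : Option V}

/-- no chords on a path in an acyclic graph -/
lemma adj_on_path (hA : T.IsAcyclic) {b v u : V} (q : T.Walk b v) (hq : q.IsPath)
    (hu : u ∉ q.support) (hub : T.Adj u b) {y : V} (hy : y ∈ q.support)
    (hadj : T.Adj u y) : y = b := by
  classical
  have h1 : (Walk.cons hub (q.takeUntil y hy)).IsPath := by
    refine (hq.takeUntil hy).cons ?_
    exact fun hc => hu (q.support_takeUntil_subset hy hc)
  have h2 : (Walk.cons hadj Walk.nil).IsPath := by
    simp [Walk.isPath_def, hadj.ne]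
  have heq : (⟨_, h1⟩ : T.Path u y) = ⟨_, h2⟩ := hA.path_unique _ _
  have hwalk : Walk.cons hub (q.takeUntil y hy) = Walk.cons hadj Walk.nil :=
    congrArg Subtype.val heq
  have hb : b ∈ (Walk.cons hadj Walk.nil).support := by
    rw [← hwalk]
    simp only [Walk.support_cons, List.mem_cons]
    exact Or.inr ((q.takeUntil y hy).start_mem_support)
  simp only [Walk.support_cons, Walk.support_nil, List.mem_cons,
    List.mem_singleton, List.not_mem_nil, or_false] at hb
  rcases hb with hb | hb
  · exact absurd (hb ▸ hub) T.irrefl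
  · exact hb.symm ▸ rfl

/-- number of neighbours inside the support of a path -/
lemma path_adj_card (hA : T.IsAcyclic) {a b : V} (q : T.Walk a b) (hq : q.IsPath) :
    ∀ x ∈ q.support, (q.support.toFinset.filter fun y => T.Adj x y).card
      = (if x = a then 0 else 1) + (if x = b then 0 else 1) := by
  classical
  induction q with
  | nil =>
    intro x hx
    simp only [Walk.support_nil, List.mem_singleton] at hx
    subst hx
    simp [Finset.filter_singleton, T.irrefl]
  | @cons u v w huv p ih =>
    have hp : p.IsPath := hq.of_cons
    have hu : u ∉ p.support := by
      have := hq.support_nodup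
      simp only [Walk.support_cons, List.nodup_cons] at this
      exact this.1
    have hne : u ≠ w := fun hc => hu (hc ▸ p.end_mem_support)
    intro x hx
    simp only [Walk.support_cons, List.mem_cons] at hx
    have hsupp : (Walk.cons huv p).support.toFinset = insert u p.support.toFinset := by
      simp [Walk.support_cons]
    rw [hsupp]
    have hunotin : u ∉ p.support.toFinset := by simpa using hu
    rcases hx with hx | hx
    · subst hx
      rw [Finset.filter_insert, if_neg T.irrefl]
      have hfe : p.support.toFinset.filter (fun y => T.Adj x y) = {v} := by
        apply Finset.ext
        intro y
        simp only [Finset.mem_filter, List.mem_toFinset, Finset.mem_singleton]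
        constructor
        · rintro ⟨hy1, hy2⟩
          exact adj_on_path hA p hp hu huv hy1 hy2
        · rintro rfl
          exact ⟨p.start_mem_support, huv⟩
      rw [hfe, if_pos rfl, if_neg hne]
      simp
    · have hxu : x ≠ u := fun hc => hu (hc ▸ hx)
      rw [Finset.filter_insert]
      have hadj_iff : T.Adj x u ↔ x = v := by
        constructor
        · intro hadjxu
          exact adj_on_path hA p hp hu huv hx hadjxu.symm
        · rintro rfl; exact huv.symm
      by_cases hxv : x = v
      · rw [if_pos (hadj_iff.mpr hxv)]
        rw [Finset.card_insert_of_notMem (fun hc => hunotin (Finset.filter_subset _ _ hc))]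
        rw [ih hp x hx, if_neg hxu, if_pos hxv]
        omega
      · rw [if_neg (fun hc => hxv (hadj_iff.mp hc))]
        rw [ih hp x hx, if_neg hxu, if_neg hxv]

section TCfacts
variable (hTC : Tng T S w att) (hD : D = S ∪ w.support.toFinset)

include hTC hD

lemma filter_union_card {y : V} :
    degIn T D y = (S.filter fun z => T.Adj y z).card
      + (w.support.toFinset.filter fun z => T.Adj y z).card := by
  subst hD
  rw [degIn, Finset.filter_union]
  apply Finset.card_union_of_disjoint
  apply Finset.disjoint_filter_filter
  rw [Finset.disjoint_left]
  intro z hz hz2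
  exact hTC.disj z (by simpa using hz2) hz

lemma deg_D_of_S {y : V} (hy : y ∈ S) (hya : ∀ a, att = some a → y ≠ a) :
    degIn T D y = degIn T S y := by
  rw [filter_union_card hTC hD]
  have : (w.support.toFinset.filter fun z => T.Adj y z) = ∅ := by
    rw [Finset.filter_eq_empty_iff]
    intro x hxm hadj
    have := (hTC.adjS x (by simpa using hxm) y hy hadj.symm).2
    exact hya y this rfl
  rw [this]
  simp [degIn]

lemma deg_D_att {a : V} (ha : att = some a) :
    degIn T D a = degIn T S a + 1 := by
  rw [filter_union_card hTC hD]
  have : (w.support.toFinset.filter fun z => T.Adj a z) = {h} := by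
    apply Finset.ext
    intro x
    simp only [Finset.mem_filter, List.mem_toFinset, Finset.mem_singleton]
    constructor
    · rintro ⟨hx1, hx2⟩
      exact (hTC.adjS x hx1 a (hTC.attm a ha).1 hx2.symm).1
    · rintro rfl
      exact ⟨w.start_mem_support, (hTC.attm a ha).2.symm⟩
  rw [this]
  simp [degIn]

lemma deg_D_sup (hA : T.IsAcyclic) {x : V} (hx : x ∈ w.support) :
    degIn T D x = ((if x = h then 0 else 1) + (if x = root then 0 else 1))
      + (if x = h then (if att = none then 0 else 1) else 0) := by
  have hcard := filter_union_card (D := D) (w := w) hTC hD (y := x)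
  rw [path_adj_card hA w hTC.path x hx] at hcard
  have hS : (S.filter fun z => T.Adj x z).card
      = (if x = h then (if att = none then 0 else 1) else 0) := by
    by_cases hxh : x = h
    · subst hxh
      rw [if_pos rfl]
      rcases hatt : att with _ | a
      · rw [if_pos rfl, Finset.card_eq_zero, Finset.filter_eq_empty_iff]
        intro y hy hadj
        have := (hTC.adjS x hx y hy hadj).2
        rw [hatt] at this
        exact nomatch this
      · rw [if_neg (by simp)]
        have : (S.filter fun z => T.Adj x z) = {a} := by
          apply Finset.ext
          intro y
          simp only [Finset.mem_filter, Finset.mem_singleton]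
          constructor
          · rintro ⟨hy1, hy2⟩
            have := (hTC.adjS x hx y hy1 hy2).2
            rw [hatt] at this
            exact (Option.some_inj.mp this).symm
          · rintro rfl
            exact ⟨(hTC.attm y hatt).1, (hTC.attm y hatt).2⟩
        rw [this, Finset.card_singleton]
    · rw [if_neg hxh]
      rw [Finset.card_eq_zero, Finset.filter_eq_empty_iff]
      intro y hy hadj
      exact hxh (hTC.adjS x hx y hy hadj).1
  rw [hcard, hS, Nat.add_comm]

lemma deg_D_sup_le (hA : T.IsAcyclic) {x : V} (hx : x ∈ w.support) :
    degIn T D x ≤ 2 := by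
  rw [deg_D_sup hTC hD hA hx]
  split_ifs <;> omega

/-- a walk in `D` starting in `S` avoiding the attachment stays in `S` -/
lemma mem_D_iff {x : V} (hx : x ∈ D) : x ∈ S ∨ x ∈ w.support := by
  subst hD
  rcases Finset.mem_union.mp hx with hx | hx
  · exact Or.inl hx
  · exact Or.inr (by simpa using hx)

lemma walk_stays_S {v u : V} (p : T.Walk v u) (hsup : ∀ x ∈ p.support, x ∈ D)
    (hv : v ∈ S) (hatt : ∀ a, att = some a → a ∉ p.support) :
    ∀ x ∈ p.support, x ∈ S := by
  induction p with
  | nil =>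
    intro x hx
    simp only [Walk.support_nil, List.mem_singleton] at hx
    exact hx ▸ hv
  | @cons v b u hadj q ih =>
    have hb : b ∈ S := by
      rcases mem_D_iff hTC hD (hsup b (by simp)) with hb | hb
      · exact hb
      · exfalso
        have := (hTC.adjS b hb v hv hadj.symm).2
        exact hatt v this (by simp)
    intro x hx
    simp only [Walk.support_cons, List.mem_cons] at hx
    rcases hx with rfl | hx
    · exact hv
    · exact ih (fun y hy => hsup y (by simp [hy])) hb
        (fun a haa hmem => hatt a haa (by simp [hmem])) x hx

/-- a path in `D` from `S` to the attachment stays in `S` -/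
lemma walk_to_att {v a : V} (ha : att = some a) (p : T.Walk v a) (hp : p.IsPath)
    (hsup : ∀ x ∈ p.support, x ∈ D) (hv : v ∈ S) :
    ∀ x ∈ p.support, x ∈ S := by
  induction p with
  | nil =>
    intro x hx
    simp only [Walk.support_nil, List.mem_singleton] at hx
    exact hx ▸ hv
  | @cons v b u hadj q ih =>
    have hb : b ∈ S := by
      rcases mem_D_iff hTC hD (hsup b (by simp)) with hb | hb
      · exact hb
      · exfalso
        have h2 := (hTC.adjS b hb v hv hadj.symm).2
        rw [ha] at h2
        have hva : v = u := (Option.some_inj.mp h2).symm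
        subst hva
        rw [Walk.isPath_iff_eq_nil] at hp
        exact nomatch hp
    intro x hx
    simp only [Walk.support_cons, List.mem_cons] at hx
    rcases hx with rfl | hx
    · exact hv
    · exact ih ha hp.of_cons (fun y hy => hsup y (by simp [hy])) hb x hx

/-- a walk in `D` from `S` into the tongue passes through the attachment -/
lemma walk_crosses {v u : V} (p : T.Walk v u) (hsup : ∀ x ∈ p.support, x ∈ D)
    (hv : v ∈ S) (hu : u ∈ w.support) :
    ∃ a, att = some a ∧ a ∈ p.support := by
  induction p with
  | nil => exact absurd hv (hTC.disj _ hu)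
  | @cons v b u hadj q ih =>
    rcases mem_D_iff hTC hD (hsup b (by simp)) with hb | hb
    · rcases ih (fun y hy => hsup y (by simp [hy])) hb hu with ⟨a, ha1, ha2⟩
      exact ⟨a, ha1, by simp [ha2]⟩
    · exact ⟨v, (hTC.adjS b hb v hv hadj.symm).2, by simp⟩

end TCfacts


lemma exists_pred {v u : V} (p : T.Walk v u) (hl : 0 < p.length) :
    ∃ x ∈ p.support, T.Adj x u := by
  induction p with
  | nil => simp at hl
  | @cons v b u hadj q ih =>
    cases q with
    | nil => exact ⟨v, by simp, hadj⟩
    | @cons _ c _ hadj2 q2 =>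
      obtain ⟨x, hx1, hx2⟩ := ih (by simp)
      refine ⟨x, ?_, hx2⟩
      simp only [Walk.support_cons, List.mem_cons] at hx1 ⊢
      tauto

lemma take_drop_eq {v u a : V} {p : T.Walk v u} (hp : p.IsPath) (ha : a ∈ p.support)
    {x : V} (hx1 : x ∈ (p.takeUntil a ha).support)
    (hx2 : x ∈ (p.dropUntil a ha).support) : x = a := by
  have hsp : p.support = (p.takeUntil a ha).support ++ (p.dropUntil a ha).support.tail := by
    conv_lhs => rw [← p.take_spec ha]
    rw [Walk.support_append]
  have hnd := hp.support_nodup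
  rw [hsp, List.nodup_append'] at hnd
  rcases (by rw [Walk.support_eq_cons (p.dropUntil a ha)] at hx2; simpa only [List.mem_cons] using hx2 :
      x = a ∨ x ∈ (p.dropUntil a ha).support.tail) with h | h
  · exact h
  · exact absurd h (hnd.2.2 hx1)

/-- the data witnessing that `v` might lose its exterior-major status -/
def LoserData (T : SimpleGraph V) [DecidableRel T.Adj] (S : Finset V) (a v : V) : Prop :=
  ∃ (u : V) (q : T.Walk a v) (r : T.Walk a u),
    q.IsPath ∧ r.IsPath ∧ 0 < q.length ∧ 0 < r.length ∧
    (∀ x ∈ q.support, x ∈ S) ∧ (∀ x ∈ r.support, x ∈ S) ∧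
    (∀ x ∈ q.support, x ≠ v → degIn T S x = 2) ∧
    (∀ x ∈ r.support, x ≠ u → degIn T S x = 2) ∧
    degIn T S u = 1 ∧ 3 ≤ degIn T S v ∧
    (∀ x ∈ q.support, x ≠ a → x ∉ r.support)

/-- chains of degree-2 vertices are uniquely determined -/
lemma forced {c b1 : V} (q1 : T.Walk c b1) :
    ∀ {b2 : V} (q2 : T.Walk c b2) (prev : V), q1.IsPath → q2.IsPath →
    (∀ x ∈ q1.support, x ∈ S) → (∀ x ∈ q2.support, x ∈ S) →
    (∀ x ∈ q1.support, x ≠ b1 → degIn T S x = 2) →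
    (∀ x ∈ q2.support, x ≠ b2 → degIn T S x = 2) →
    degIn T S b1 ≠ 2 → degIn T S b2 ≠ 2 →
    prev ∈ S → T.Adj prev c → prev ∉ q1.support → prev ∉ q2.support →
    b1 = b2 := by
  induction q1 with
  | nil =>
    intro b2 q2 prev h1 h2 hs1 hs2 hd1 hd2 he1 he2 hpS hpadj hp1 hp2
    cases q2 with
    | nil => rfl
    | @cons _ m _ hadj2 t2 =>
      exfalso
      apply he1
      apply hd2 _ (by simp)
      intro hc
      have hnd := h2.support_nodup
      simp only [Walk.support_cons, List.nodup_cons] at hnd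
      exact hnd.1 (hc ▸ t2.end_mem_support)
  | @cons c m b1 hadj1 t1 ih =>
    intro b2 q2 prev h1 h2 hs1 hs2 hd1 hd2 he1 he2 hpS hpadj hp1 hp2
    have hct1 : c ∉ t1.support := by
      have := h1.support_nodup
      simp only [Walk.support_cons, List.nodup_cons] at this
      exact this.1
    have hcb1 : c ≠ b1 := fun hc => hct1 (hc ▸ t1.end_mem_support)
    have hdc : degIn T S c = 2 := hd1 c (by simp) hcb1
    cases q2 with
    | nil => exact absurd hdc he2
    | @cons _ m2 _ hadj2 t2 =>
      have hct2 : c ∉ t2.support := by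
        have := h2.support_nodup
        simp only [Walk.support_cons, List.nodup_cons] at this
        exact this.1
      have hmm : m = m2 := by
        by_contra hne
        have hmem : ∀ z, T.Adj c z → z ∈ S → z ∈ S.filter fun y => T.Adj c y := by
          intro z hz1 hz2
          simp [hz1, hz2]
        have hprevm : prev ≠ m := fun hc => hp1 (by
          rw [hc]; simp [Walk.support_cons, t1.start_mem_support])
        have hprevm2 : prev ≠ m2 := fun hc => hp2 (by
          rw [hc]; simp [Walk.support_cons, t2.start_mem_support])
        have hsub : {prev, m, m2} ⊆ S.filter fun y => T.Adj c y := by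
          intro z hz
          simp only [Finset.mem_insert, Finset.mem_singleton] at hz
          rcases hz with h | h | h
          · rw [h]; exact hmem prev hpadj.symm hpS
          · rw [h]
            exact hmem m hadj1 (hs1 m (by simp [Walk.support_cons, t1.start_mem_support]))
          · rw [h]
            exact hmem m2 hadj2 (hs2 m2 (by simp [Walk.support_cons, t2.start_mem_support]))
        have hc3 : ({prev, m, m2} : Finset V).card = 3 := by
          rw [Finset.card_insert_of_notMem (by simp [hprevm, hprevm2]),
            Finset.card_insert_of_notMem (by simp [hne]), Finset.card_singleton]
        have := Finset.card_le_card hsub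
        rw [hc3] at this
        rw [degIn] at hdc
        omega
      subst hmm
      exact ih t2 c h1.of_cons h2.of_cons
        (fun x hx => hs1 x (by simp [hx])) (fun x hx => hs2 x (by simp [hx]))
        (fun x hx hxb => hd1 x (by simp [hx]) hxb)
        (fun x hx hxb => hd2 x (by simp [hx]) hxb)
        he1 he2 (hs1 c (by simp)) hadj1 hct1 hct2

lemma loser_unique {a v1 v2 : V} (hdeg2 : degIn T S a = 2)
    (L1 : LoserData T S a v1) (L2 : LoserData T S a v2) : v1 = v2 := by
  obtain ⟨u1, q1, r1, hq1, hr1, hql1, hrl1, hqs1, hrs1, hqd1, hrd1, hu1, hv1, hdisj1⟩ := L1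
  obtain ⟨u2, q2, r2, hq2, hr2, hql2, hrl2, hqs2, hrs2, hqd2, hrd2, hu2, hv2, hdisj2⟩ := L2
  cases q1 with
  | nil => simp at hql1
  | @cons _ m1 _ hadjm1 t1 =>
  cases r1 with
  | nil => simp at hrl1
  | @cons _ n1 _ hadjn1 s1 =>
  cases q2 with
  | nil => simp at hql2
  | @cons _ m2 _ hadjm2 t2 =>
  -- m1 n1 are the two neighbours of a in S
  have hm1S : m1 ∈ S := hqs1 m1 (by simp [Walk.support_cons, t1.start_mem_support])
  have hn1S : n1 ∈ S := hrs1 n1 (by simp [Walk.support_cons, s1.start_mem_support])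
  have hm2S : m2 ∈ S := hqs2 m2 (by simp [Walk.support_cons, t2.start_mem_support])
  have hm1n1 : m1 ≠ n1 := by
    intro hc
    have hm1a : m1 ≠ a := by
      intro hc2
      have := hq1.support_nodup
      simp only [Walk.support_cons, List.nodup_cons] at this
      exact this.1 (by rw [← hc2]; exact t1.start_mem_support)
    exact hdisj1 m1 (by simp [Walk.support_cons, t1.start_mem_support]) hm1a
      (by rw [hc]; simp [Walk.support_cons, s1.start_mem_support])
  have hFsub : ({m1, n1} : Finset V) ⊆ S.filter fun y => T.Adj a y := by
    intro z hz
    simp only [Finset.mem_insert, Finset.mem_singleton] at hz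
    rcases hz with rfl | rfl
    · simp [hm1S, hadjm1]
    · simp [hn1S, hadjn1]
  have hFeq : ({m1, n1} : Finset V) = S.filter fun y => T.Adj a y := by
    apply Finset.eq_of_subset_of_card_le hFsub
    rw [show (S.filter fun y => T.Adj a y).card = degIn T S a from rfl, hdeg2]
    rw [Finset.card_insert_of_notMem (by simp [hm1n1]), Finset.card_singleton]
  have hm2F : m2 ∈ ({m1, n1} : Finset V) := by
    rw [hFeq]; simp [hm2S, hadjm2]
  have hat1 : a ∉ t1.support := by
    have := hq1.support_nodup
    simp only [Walk.support_cons, List.nodup_cons] at this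
    exact this.1
  have has1 : a ∉ s1.support := by
    have := hr1.support_nodup
    simp only [Walk.support_cons, List.nodup_cons] at this
    exact this.1
  have hat2 : a ∉ t2.support := by
    have := hq2.support_nodup
    simp only [Walk.support_cons, List.nodup_cons] at this
    exact this.1
  have haS : a ∈ S := hqs1 a (by simp)
  simp only [Finset.mem_insert, Finset.mem_singleton] at hm2F
  rcases hm2F with rfl | rfl
  · -- same first step : same endpoint
    exact forced t1 t2 a hq1.of_cons hq2.of_cons
      (fun x hx => hqs1 x (by simp [hx])) (fun x hx => hqs2 x (by simp [hx]))
      (fun x hx hxb => hqd1 x (by simp [hx]) hxb)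
      (fun x hx hxb => hqd2 x (by simp [hx]) hxb)
      (by omega) (by omega) haS hadjm1 hat1 hat2
  · -- q2 follows r1 : contradiction since endpoints have different degrees
    exfalso
    have := forced s1 t2 a hr1.of_cons hq2.of_cons
      (fun x hx => hrs1 x (by simp [hx])) (fun x hx => hqs2 x (by simp [hx]))
      (fun x hx hxb => hrd1 x (by simp [hx]) hxb)
      (fun x hx hxb => hqd2 x (by simp [hx]) hxb)
      (by omega) (by omega) haS hadjn1 has1 hat2
    subst this
    omega


lemma deg_D_ge {y : V} (hTC : Tng T S w att) (hD : D = S ∪ w.support.toFinset) :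
    degIn T S y ≤ degIn T D y := by
  rw [filter_union_card hTC hD]
  exact Nat.le_add_right _ _

lemma gain (hA : T.IsAcyclic) (hTC : Tng T S w att) (hD : D = S ∪ w.support.toFinset)
    {v : V} (hv : IsExtMajorIn T D v) (hva : ∀ a, att = some a → v ≠ a) :
    IsExtMajorIn T S v := by
  obtain ⟨hvD, hdeg, u, p, hp, hlen, hsupp, hdegu, hint⟩ := hv
  have hvS : v ∈ S := by
    rcases mem_D_iff hTC hD hvD with h1 | h1
    · exact h1
    · exact absurd hdeg (by have := deg_D_sup_le hTC hD hA h1; omega)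
  refine ⟨hvS, ?_, ?_⟩
  · rw [deg_D_of_S hTC hD hvS hva] at hdeg; exact hdeg
  by_cases hacase : ∃ a, att = some a ∧ a ∈ p.support
  · obtain ⟨a, ha, hamem⟩ := hacase
    have hvna : v ≠ a := hva a ha
    by_cases hua : u = a
    · exfalso
      subst hua
      have hstay := walk_to_att hTC hD ha p hp hsupp hvS
      have hdSu := deg_D_att hTC hD ha
      obtain ⟨x, hx1, hx2⟩ := exists_pred p hlen
      have hxS : x ∈ S := hstay x hx1
      have hpos : 0 < degIn T S u :=
        Finset.card_pos.mpr ⟨x, by simp [degIn, hxS, hx2.symm]⟩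
      omega
    · have hana : a ≠ u := fun hc => hua hc.symm
      have hdar : degIn T D a = 2 := hint a hamem (fun hc => hvna hc.symm) hana
      have hdaS : degIn T S a = 1 := by have := deg_D_att hTC hD ha; omega
      have hq : (p.takeUntil a hamem).IsPath := hp.takeUntil hamem
      have hqsub : ∀ x ∈ (p.takeUntil a hamem).support, x ∈ p.support :=
        fun x hx => p.support_takeUntil_subset hamem hx
      have hqS : ∀ x ∈ (p.takeUntil a hamem).support, x ∈ S :=
        walk_to_att hTC hD ha _ hq (fun x hx => hsupp x (hqsub x hx)) hvS
      refine ⟨a, p.takeUntil a hamem, hq, ?_, hqS, hdaS, ?_⟩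
      · rcases Nat.eq_zero_or_pos (p.takeUntil a hamem).length with h0 | h0
        · exact absurd (Walk.eq_of_length_eq_zero h0) hvna
        · exact h0
      · intro x hx hxv hxa
        have hxp : x ∈ p.support := hqsub x hx
        have hxu : x ≠ u := by
          intro hc
          subst hc
          exact hua (take_drop_eq hp hamem hx ((p.dropUntil a hamem).end_mem_support))
        have hres := hint x hxp hxv hxu
        rw [deg_D_of_S hTC hD (hqS x hx) (fun a' ha' => by
          have h9 : a = a' := Option.some_inj.mp (ha.symm.trans ha')
          rw [← h9]; exact hxa)] at hres
        exact hres
  · have hstay := walk_stays_S hTC hD p hsupp hvS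
      (fun a ha hmem => hacase ⟨a, ha, hmem⟩)
    have hnot : ∀ x ∈ p.support, ∀ a', att = some a' → x ≠ a' :=
      fun x hx a' ha' hc => hacase ⟨a', ha', by rw [← hc]; exact hx⟩
    refine ⟨u, p, hp, hlen, hstay, ?_, ?_⟩
    · rw [← deg_D_of_S hTC hD (hstay u p.end_mem_support) (hnot u p.end_mem_support)]
      exact hdegu
    · intro x hx hxv hxu
      rw [← deg_D_of_S hTC hD (hstay x hx) (hnot x hx)]
      exact hint x hx hxv hxu

lemma loss (hA : T.IsAcyclic) (hTC : Tng T S w att) (hD : D = S ∪ w.support.toFinset)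
    {v : V} (hv : IsExtMajorIn T S v) :
    IsExtMajorIn T D v ∨
      ∃ a, att = some a ∧ degIn T S a = 2 ∧ v ≠ a ∧ LoserData T S a v := by
  obtain ⟨hvS, hdeg, u, p, hp, hlen, hsupp, hdegu, hint⟩ := hv
  have hSD : S ⊆ D := by rw [hD]; exact Finset.subset_union_left
  have hvD : v ∈ D := hSD hvS
  have hsuppD : ∀ x ∈ p.support, x ∈ D := fun x hx => hSD (hsupp x hx)
  have hvu : v ≠ u := by
    intro hc
    subst hc
    rw [Walk.isPath_iff_eq_nil] at hp
    subst hp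
    simp at hlen
  rcases hatt2 : att with _ | a
  · -- no attachment
    left
    have hya : ∀ x : V, ∀ a' : V, att = some a' → x ≠ a' := fun x a' ha' => by
      rw [hatt2] at ha'; exact nomatch ha'
    refine ⟨hvD, le_trans hdeg (deg_D_ge hTC hD), u, p, hp, hlen, hsuppD, ?_, ?_⟩
    · rw [deg_D_of_S hTC hD (hsupp u p.end_mem_support) (hya u)]; exact hdegu
    · intro x hx hxv hxu
      rw [deg_D_of_S hTC hD (hsupp x hx) (hya x)]
      exact hint x hx hxv hxu
  · by_cases hamem : a ∈ p.support
    · by_cases hav : a = v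
      · -- v itself is the attachment : the old leaf path still works
        left
        subst hav
        refine ⟨hvD, le_trans hdeg (deg_D_ge hTC hD), u, p, hp, hlen, hsuppD, ?_, ?_⟩
        · rw [deg_D_of_S hTC hD (hsupp u p.end_mem_support) (fun a' ha' => by
            have h9 : a = a' := Option.some_inj.mp (hatt2.symm.trans ha')
            rw [← h9]; exact Ne.symm hvu)]
          exact hdegu
        · intro x hx hxv hxu
          rw [deg_D_of_S hTC hD (hsupp x hx) (fun a' ha' => by
            have h9 : a = a' := Option.some_inj.mp (hatt2.symm.trans ha')
            rw [← h9]; exact hxv)]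
          exact hint x hx hxv hxu
      · by_cases hau : a = u
        · -- the attachment is the old leaf : extend the leaf path into the tongue
          left
          subst hau
          have hadjhu : T.Adj h a := (hTC.attm a hatt2).2
          have hsup2 : (p.append (Walk.cons hadjhu.symm w)).support
              = p.support ++ w.support := by
            rw [Walk.support_append, Walk.support_cons]
            rfl
          have hdisj : ∀ x ∈ p.support, x ∉ w.support :=
            fun x hx hc => hTC.disj x hc (hsupp x hx)
          have hupath : (p.append (Walk.cons hadjhu.symm w)).IsPath := by
            rw [Walk.isPath_def, hsup2]
            exact List.nodup_append'.mpr ⟨hp.support_nodup, hTC.path.support_nodup, hdisj⟩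
          refine ⟨hvD, le_trans hdeg (deg_D_ge hTC hD), root,
            p.append (Walk.cons hadjhu.symm w), hupath, ?_, ?_, ?_, ?_⟩
          · rw [Walk.length_append, Walk.length_cons]
            omega
          · intro x hx
            rw [hsup2, List.mem_append] at hx
            rcases hx with hx | hx
            · exact hsuppD x hx
            · rw [hD]
              exact Finset.mem_union_right _ (by simpa using hx)
          · rw [deg_D_sup hTC hD hA w.end_mem_support, hatt2]
            by_cases hrh : root = h
            · rw [if_pos hrh, if_pos rfl, if_pos hrh]
              simp
            · rw [if_neg hrh, if_pos rfl, if_neg hrh]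
          · intro x hx hxv hxroot
            rw [hsup2, List.mem_append] at hx
            rcases hx with hx | hx
            · by_cases hxu : x = a
              · subst hxu
                have := deg_D_att hTC hD hatt2
                omega
              · rw [deg_D_of_S hTC hD (hsupp x hx) (fun a' ha' => by
                  have h9 : a = a' := Option.some_inj.mp (hatt2.symm.trans ha')
                  rw [← h9]; exact hxu)]
                exact hint x hx hxv hxu
            · rw [deg_D_sup hTC hD hA hx, hatt2]
              by_cases hxh : x = h
              · rw [if_pos hxh, if_neg hxroot, if_pos hxh]
                simp
              · rw [if_neg hxh, if_neg hxroot, if_neg hxh]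
        · -- the attachment is interior : v may lose, record the loser data
          right
          have hdega2 : degIn T S a = 2 := hint a hamem hav hau
          have hudrop : u ∈ (p.dropUntil a hamem).support := (p.dropUntil a hamem).end_mem_support
          have hvtake : v ∈ (p.takeUntil a hamem).support := (p.takeUntil a hamem).start_mem_support
          have hqS : ∀ x ∈ (p.takeUntil a hamem).support, x ∈ S :=
            fun x hx => hsupp x (p.support_takeUntil_subset hamem hx)
          have hrS : ∀ x ∈ (p.dropUntil a hamem).support, x ∈ S :=
            fun x hx => hsupp x (p.support_dropUntil_subset hamem hx)
          refine ⟨a, rfl, hdega2, fun hc => hav hc.symm,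
            u, (p.takeUntil a hamem).reverse, p.dropUntil a hamem,
            (hp.takeUntil hamem).reverse, hp.dropUntil hamem, ?_, ?_, ?_, ?_, ?_, ?_,
            hdegu, hdeg, ?_⟩
          · rw [Walk.length_reverse]
            rcases Nat.eq_zero_or_pos (p.takeUntil a hamem).length with h0 | h0
            · exact absurd (Walk.eq_of_length_eq_zero h0) (fun hc => hav hc.symm)
            · exact h0
          · rcases Nat.eq_zero_or_pos (p.dropUntil a hamem).length with h0 | h0
            · exact absurd (Walk.eq_of_length_eq_zero h0) hau
            · exact h0
          · intro x hx
            rw [Walk.support_reverse, List.mem_reverse] at hx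
            exact hqS x hx
          · exact hrS
          · intro x hx hxv
            rw [Walk.support_reverse, List.mem_reverse] at hx
            by_cases hxa : x = a
            · rw [hxa]; exact hdega2
            · have hxu : x ≠ u := by
                intro hc
                subst hc
                exact hau (take_drop_eq hp hamem hx hudrop).symm
              exact hint x (p.support_takeUntil_subset hamem hx) hxv hxu
          · intro x hx hxu
            by_cases hxa : x = a
            · rw [hxa]; exact hdega2
            · have hxv : x ≠ v := by
                intro hc
                subst hc
                exact hav (take_drop_eq hp hamem hvtake hx).symm
              exact hint x (p.support_dropUntil_subset hamem hx) hxv hxu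
          · intro x hx hxa hc
            rw [Walk.support_reverse, List.mem_reverse] at hx
            exact hxa (take_drop_eq hp hamem hx hc)
    · -- attachment not on the path : the old leaf path still works
      left
      have hya : ∀ x ∈ p.support, ∀ a' : V, att = some a' → x ≠ a' := by
        intro x hx a' ha' hc
        have h9 : a = a' := Option.some_inj.mp (hatt2.symm.trans ha')
        rw [← h9] at hc
        exact hamem (hc ▸ hx)
      refine ⟨hvD, le_trans hdeg (deg_D_ge hTC hD), u, p, hp, hlen, hsuppD, ?_, ?_⟩
      · rw [deg_D_of_S hTC hD (hsupp u p.end_mem_support) (hya u p.end_mem_support)]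
        exact hdegu
      · intro x hx hxv hxu
        rw [deg_D_of_S hTC hD (hsupp x hx) (hya x hx)]
        exact hint x hx hxv hxu

/-- the relation between stem set and down-stem set -/
def SDRel (T : SimpleGraph V) [DecidableRel T.Adj] (root : V) (S D : Finset V) : Prop :=
  D = S ∨ ∃ (h : V) (w : T.Walk h root) (att : Option V),
    Tng T S w att ∧ D = S ∪ w.support.toFinset

lemma rel_step (hA : T.IsAcyclic) (hrel : SDRel T root S D) :
    SDRel T root (S.filter fun v => 1 < degIn T S v)
      (D.filter fun v => v = root ∨ 1 < degIn T D v) := by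
  classical
  set S' := S.filter fun v => 1 < degIn T S v with hS'
  rcases hrel with hDS | ⟨h, w, att, hTC, hD⟩
  · -- case D = S
    rw [hDS]
    by_cases hroot : root ∈ S ∧ degIn T S root ≤ 1
    · -- the root becomes a singleton tongue
      refine Or.inr ⟨root, Walk.nil, ?_⟩
      set F := S'.filter fun y => T.Adj root y with hF
      have hFcard : F.card ≤ 1 := by
        calc F.card ≤ (S.filter fun y => T.Adj root y).card := by
              apply Finset.card_le_card
              intro x hx
              simp only [hF, hS', Finset.mem_filter] at hx ⊢
              exact ⟨hx.1.1, hx.2⟩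
          _ ≤ 1 := hroot.2
      have hset : (S.filter fun v => v = root ∨ 1 < degIn T S v)
          = S' ∪ (Walk.nil (u := root) (G := T)).support.toFinset := by
        apply Finset.ext
        intro v
        simp only [Finset.mem_filter, hS', Finset.mem_union, Walk.support_nil,
          List.toFinset_cons, List.toFinset_nil, LawfulSingleton.insert_empty_eq, Finset.mem_singleton]
        constructor
        · rintro ⟨hv, rfl | hv2⟩
          · exact Or.inr rfl
          · exact Or.inl ⟨hv, hv2⟩
        · rintro (⟨hv, hv2⟩ | rfl)
          · exact ⟨hv, Or.inr hv2⟩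
          · exact ⟨hroot.1, Or.inl rfl⟩
      by_cases hFe : F = ∅
      · refine ⟨none, ⟨Walk.IsPath.nil, ?_, ?_, ?_⟩, hset⟩
        · intro x hx
          simp only [Walk.support_nil, List.mem_singleton] at hx
          subst hx
          simp only [hS', Finset.mem_filter, not_and, not_lt]
          exact fun _ => hroot.2
        · intro x hx y hy hadj
          exfalso
          have hxr : x = root := by simpa using hx
          subst hxr
          have : y ∈ F := by simp [hF, hy, hadj]
          rw [hFe] at this
          exact absurd this (Finset.notMem_empty y)
        · intro a ha
          exact nomatch ha
      · obtain ⟨b, hb⟩ := Finset.nonempty_iff_ne_empty.mpr hFe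
        refine ⟨some b, ⟨Walk.IsPath.nil, ?_, ?_, ?_⟩, hset⟩
        · intro x hx
          simp only [Walk.support_nil, List.mem_singleton] at hx
          subst hx
          simp only [hS', Finset.mem_filter, not_and, not_lt]
          exact fun _ => hroot.2
        · intro x hx y hy hadj
          have hxr : x = root := by simpa using hx
          subst hxr
          have hyF : y ∈ F := by simp [hF, hy, hadj]
          have : y = b := by
            have := Finset.card_le_one.mp hFcard y hyF b hb
            exact this
          exact ⟨rfl, by rw [this]⟩
        · intro a ha
          have hab : b = a := Option.some_inj.mp ha
          subst hab
          simp only [hF, Finset.mem_filter] at hb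
          exact ⟨hb.1, hb.2⟩
    · -- no tongue is created
      left
      apply Finset.ext
      intro v
      simp only [Finset.mem_filter, hS']
      constructor
      · rintro ⟨hv, rfl | hv2⟩
        · refine ⟨hv, ?_⟩
          by_contra hc
          exact hroot ⟨hv, not_lt.mp hc⟩
        · exact ⟨hv, hv2⟩
      · rintro ⟨hv, hv2⟩
        exact ⟨hv, Or.inr hv2⟩
  · -- tongue case
    have hrootsup : root ∈ w.support := w.end_mem_support
    have hSnotroot : ∀ y ∈ S, y ≠ root := fun y hy hc =>
      hTC.disj root hrootsup (hc ▸ hy)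
    have hSD : S ⊆ D := by rw [hD]; exact Finset.subset_union_left
    have hsupD : ∀ x ∈ w.support, x ∈ D := by
      intro x hx
      rw [hD]
      exact Finset.mem_union_right _ (by simpa using hx)
    -- all tongue vertices survive when there is an attachment
    have hsup_surv : ∀ a, att = some a → ∀ x ∈ w.support,
        x ∈ D.filter fun v => v = root ∨ 1 < degIn T D v := by
      intro a ha x hx
      rw [Finset.mem_filter]
      refine ⟨hsupD x hx, ?_⟩
      by_cases hxr : x = root
      · exact Or.inl hxr
      · refine Or.inr ?_
        rw [deg_D_sup hTC hD hA hx]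
        have hattne : ¬(att = none) := by rw [ha]; simp
        by_cases hxh : x = h
        · subst hxh
          rw [if_pos rfl, if_neg hxr, if_pos rfl, if_neg hattne]
          omega
        · rw [if_neg hxh, if_neg hxh, if_neg hxr]
          omega
    -- S-vertices other than the attachment survive iff they are in S'
    have hS_mem : ∀ y ∈ S, (∀ a, att = some a → y ≠ a) →
        ((y ∈ D.filter fun v => v = root ∨ 1 < degIn T D v) ↔ y ∈ S') := by
      intro y hy hya
      rw [Finset.mem_filter, hS', Finset.mem_filter]
      constructor
      · rintro ⟨-, rfl | h2⟩
        · exact absurd rfl (hSnotroot _ hy)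
        · rw [deg_D_of_S hTC hD hy hya] at h2
          exact ⟨hy, h2⟩
      · rintro ⟨-, h2⟩
        refine ⟨hSD hy, Or.inr ?_⟩
        rw [deg_D_of_S hTC hD hy hya]
        exact h2
    rcases hatt : att with _ | a
    · -- no attachment
      subst hatt
      clear hsup_surv
      by_cases hhr : h = root
      · -- singleton-ish tongue : keep it
        refine Or.inr ⟨h, w, none, ⟨hTC.path, ?_, ?_, ?_⟩, ?_⟩
        · intro x hx
          exact fun hc => hTC.disj x hx (Finset.mem_of_mem_filter x hc)
        · intro x hx y hy hadj
          exact absurd (hTC.adjS x hx y (Finset.mem_of_mem_filter y hy) hadj).2 (by simp)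
        · intro a ha; exact nomatch ha
        · apply Finset.ext
          intro v
          rw [Finset.mem_union]
          constructor
          · intro hv
            have hvD := Finset.mem_of_mem_filter v hv
            rcases mem_D_iff hTC hD hvD with hvS | hvsup
            · exact Or.inl ((hS_mem v hvS (by simp)).mp hv)
            · exact Or.inr (by simpa using hvsup)
          · intro hv
            rcases hv with hv | hv
            · exact (hS_mem v ((Finset.filter_subset _ S hv))
                (by simp)).mpr hv
            · have hvsup : v ∈ w.support := by simpa using hv
              rw [Finset.mem_filter]
              refine ⟨hsupD v hvsup, ?_⟩
              by_cases hvr : v = root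
              · exact Or.inl hvr
              · refine Or.inr ?_
                rw [deg_D_sup hTC hD hA hvsup]
                have hvh : v ≠ h := fun hc => hvr (hc.trans hhr)
                simp [hvh, hvr]
      · -- the tongue shrinks by one
        cases w with
        | nil => exact absurd rfl hhr
        | @cons _ b _ hadj q =>
          refine Or.inr ⟨b, q, none, ⟨hTC.path.of_cons, ?_, ?_, ?_⟩, ?_⟩
          · intro x hx
            exact fun hc => hTC.disj x (by simp [hx]) (Finset.mem_of_mem_filter x hc)
          · intro x hx y hy hadj2
            exact absurd (hTC.adjS x (by simp [hx]) y
              (Finset.mem_of_mem_filter y hy) hadj2).2 (by simp)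
          · intro a ha; exact nomatch ha
          · have hhq : h ∉ q.support := by
              have := hTC.path.support_nodup
              simp only [Walk.support_cons, List.nodup_cons] at this
              exact this.1
            apply Finset.ext
            intro v
            rw [Finset.mem_union]
            constructor
            · intro hv
              have hvD := Finset.mem_of_mem_filter v hv
              rcases mem_D_iff hTC hD hvD with hvS | hvsup
              · exact Or.inl ((hS_mem v hvS (by simp)).mp hv)
              · simp only [Walk.support_cons, List.mem_cons] at hvsup
                rcases hvsup with rfl | hvq
                · exfalso
                  rw [Finset.mem_filter] at hv
                  rcases hv.2 with hvr | hvdeg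
                  · exact hhr hvr
                  · rw [deg_D_sup hTC hD hA (by simp)] at hvdeg
                    simp [hhr] at hvdeg
                · exact Or.inr (by simpa using hvq)
            · intro hv
              rcases hv with hv | hv
              · exact (hS_mem v ((Finset.filter_subset _ S hv))
                  (by simp)).mpr hv
              · have hvq : v ∈ q.support := by simpa using hv
                have hvsup : v ∈ (Walk.cons hadj q).support := by simp [hvq]
                rw [Finset.mem_filter]
                refine ⟨hsupD v hvsup, ?_⟩
                by_cases hvr : v = root
                · exact Or.inl hvr
                · refine Or.inr ?_
                  rw [deg_D_sup hTC hD hA hvsup]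
                  have hvh : v ≠ h := fun hc => hhq (hc ▸ hvq)
                  simp [hvh, hvr]
    · -- attachment a
      have haS : a ∈ S := (hTC.attm a hatt).1
      have hadjha : T.Adj h a := (hTC.attm a hatt).2
      by_cases hadeg : 1 < degIn T S a
      · -- (A) : attachment stays, tongue unchanged
        refine Or.inr ⟨h, w, some a, ⟨hTC.path, ?_, ?_, ?_⟩, ?_⟩
        · intro x hx
          exact fun hc => hTC.disj x hx (Finset.mem_of_mem_filter x hc)
        · intro x hx y hy hadj
          have h0 := hTC.adjS x hx y (Finset.mem_of_mem_filter y hy) hadj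
          exact ⟨h0.1, by rw [← hatt]; exact h0.2⟩
        · intro a' ha'
          have : a' = a := (Option.some_inj.mp ha').symm
          subst this
          refine ⟨?_, hadjha⟩
          rw [hS', Finset.mem_filter]
          exact ⟨haS, hadeg⟩
        · apply Finset.ext
          intro v
          rw [Finset.mem_union]
          constructor
          · intro hv
            have hvD := Finset.mem_of_mem_filter v hv
            rcases mem_D_iff hTC hD hvD with hvS | hvsup
            · by_cases hva : v = a
              · subst hva
                refine Or.inl ?_
                rw [hS', Finset.mem_filter]
                exact ⟨haS, hadeg⟩
              · exact Or.inl ((hS_mem v hvS (fun a' ha' => by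
                  have h9 : a = a' := Option.some_inj.mp (hatt.symm.trans ha')
                  rw [← h9]; exact hva)).mp hv)
            · exact Or.inr (by simpa using hvsup)
          · intro hv
            rcases hv with hv | hv
            · rw [Finset.mem_filter]
              have hvS : v ∈ S := (Finset.filter_subset _ S hv)
              refine ⟨hSD hvS, Or.inr ?_⟩
              have : 1 < degIn T S v := by
                rw [hS', Finset.mem_filter] at hv
                exact hv.2
              exact lt_of_lt_of_le this (deg_D_ge hTC hD)
            · exact hsup_surv a hatt v (by simpa using hv)
      · -- attachment has degree ≤ 1 in S
        have hdega : degIn T D a = degIn T S a + 1 := deg_D_att hTC hD hatt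
        by_cases hadeg1 : degIn T S a = 1
        · -- (B) : the tongue grows by the attachment
          have haq : a ∉ w.support := fun hc => hTC.disj a hc haS
          have hanS' : a ∉ S' := by
            rw [hS', Finset.mem_filter]
            rintro ⟨-, hc⟩
            omega
          set G := S'.filter fun y => T.Adj a y with hG
          have hGcard : G.card ≤ 1 := by
            calc G.card ≤ (S.filter fun y => T.Adj a y).card := by
                  apply Finset.card_le_card
                  intro x hx
                  simp only [hG, hS', Finset.mem_filter] at hx ⊢
                  exact ⟨hx.1.1, hx.2⟩
              _ = 1 := hadeg1
          have hpath2 : (Walk.cons hadjha.symm w).IsPath := hTC.path.cons haq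
          have hsupp2 : (Walk.cons hadjha.symm w).support.toFinset
              = insert a w.support.toFinset := by simp [Walk.support_cons]
          have hTC2core : ∀ (att2 : Option V),
              (∀ y ∈ S', T.Adj a y → att2 = some y) →
              (∀ a', att2 = some a' → a' ∈ S' ∧ T.Adj a a') →
              SDRel T root S' (D.filter fun v => v = root ∨ 1 < degIn T D v) := by
            intro att2 hcond hattm2
            refine Or.inr ⟨a, Walk.cons hadjha.symm w, att2, ⟨hpath2, ?_, ?_, hattm2⟩, ?_⟩
            · intro x hx
              simp only [Walk.support_cons, List.mem_cons] at hx
              rcases hx with rfl | hx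
              · exact hanS'
              · exact fun hc => hTC.disj x hx (Finset.mem_of_mem_filter x hc)
            · intro x hx y hy hadj
              simp only [Walk.support_cons, List.mem_cons] at hx
              rcases hx with rfl | hx
              · exact ⟨rfl, hcond y hy hadj⟩
              · exfalso
                have h2 := (hTC.adjS x hx y (Finset.mem_of_mem_filter y hy) hadj).2
                rw [hatt] at h2
                exact hanS' ((Option.some_inj.mp h2).symm ▸ hy)
            · apply Finset.ext
              intro v
              rw [Finset.mem_union, hsupp2, Finset.mem_insert]
              constructor
              · intro hv
                have hvD := Finset.mem_of_mem_filter v hv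
                rcases mem_D_iff hTC hD hvD with hvS | hvsup
                · by_cases hva : v = a
                  · exact Or.inr (Or.inl hva)
                  · exact Or.inl ((hS_mem v hvS (fun a' ha' => by
                      have h9 : a = a' := Option.some_inj.mp (hatt.symm.trans ha')
                      rw [← h9]; exact hva)).mp hv)
                · exact Or.inr (Or.inr (by simpa using hvsup))
              · intro hv
                rcases hv with hv | hv | hv
                · rw [Finset.mem_filter]
                  have hvS : v ∈ S := (Finset.filter_subset _ S hv)
                  refine ⟨hSD hvS, Or.inr ?_⟩
                  have : 1 < degIn T S v := by
                    rw [hS', Finset.mem_filter] at hv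
                    exact hv.2
                  exact lt_of_lt_of_le this (deg_D_ge hTC hD)
                · subst hv
                  rw [Finset.mem_filter]
                  exact ⟨hSD haS, Or.inr (by omega)⟩
                · exact hsup_surv a hatt v (by simpa using hv)
          by_cases hGe : G = ∅
          · refine hTC2core none ?_ ?_
            · intro y hy hadj
              exfalso
              have : y ∈ G := by simp [hG, hy, hadj]
              rw [hGe] at this
              exact absurd this (Finset.notMem_empty y)
            · intro a' ha'; exact nomatch ha'
          · obtain ⟨b, hb⟩ := Finset.nonempty_iff_ne_empty.mpr hGe
            refine hTC2core (some b) ?_ ?_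
            · intro y hy hadj
              have hyG : y ∈ G := by simp [hG, hy, hadj]
              rw [Finset.card_le_one.mp hGcard y hyG b hb]
            · intro a' ha'
              have : a' = b := (Option.some_inj.mp ha').symm
              subst this
              simp only [hG, Finset.mem_filter] at hb
              exact ⟨hb.1, hb.2⟩
        · -- (C) : the attachment disappears, tongue keeps its support
          have hadeg0 : degIn T S a = 0 := by omega
          refine Or.inr ⟨h, w, none, ⟨hTC.path, ?_, ?_, ?_⟩, ?_⟩
          · intro x hx
            exact fun hc => hTC.disj x hx (Finset.mem_of_mem_filter x hc)
          · intro x hx y hy hadj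
            exfalso
            have h2 := (hTC.adjS x hx y (Finset.mem_of_mem_filter y hy) hadj).2
            rw [hatt] at h2
            have hya : y = a := (Option.some_inj.mp h2).symm
            subst hya
            rw [hS', Finset.mem_filter] at hy
            omega
          · intro a' ha'; exact nomatch ha'
          · apply Finset.ext
            intro v
            rw [Finset.mem_union]
            constructor
            · intro hv
              have hvD := Finset.mem_of_mem_filter v hv
              rcases mem_D_iff hTC hD hvD with hvS | hvsup
              · by_cases hva : v = a
                · exfalso
                  subst hva
                  rw [Finset.mem_filter] at hv
                  rcases hv.2 with hvr | hvdeg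
                  · exact hSnotroot v hvS hvr
                  · omega
                · exact Or.inl ((hS_mem v hvS (fun a' ha' => by
                    have h9 : a = a' := Option.some_inj.mp (hatt.symm.trans ha')
                    rw [← h9]; exact hva)).mp hv)
              · exact Or.inr (by simpa using hvsup)
            · intro hv
              rcases hv with hv | hv
              · rw [Finset.mem_filter]
                have hvS : v ∈ S := (Finset.filter_subset _ S hv)
                refine ⟨hSD hvS, Or.inr ?_⟩
                have : 1 < degIn T S v := by
                  rw [hS', Finset.mem_filter] at hv
                  exact hv.2
                exact lt_of_lt_of_le this (deg_D_ge hTC hD)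
              · exact hsup_surv a hatt v (by simpa using hv)


lemma count_step (hA : T.IsAcyclic) (hrel : SDRel T root S D) :
    exIn T D = exIn T S ∨ exIn T D = exIn T S + 1 := by
  rcases hrel with hDS | ⟨h, w, att, hTC, hD⟩
  · rw [hDS]; exact Or.inl rfl
  unfold exIn
  set Es := {v | IsExtMajorIn T S v} with hEs
  set Ed := {v | IsExtMajorIn T D v} with hEd
  rcases hatt : att with _ | a
  · subst hatt
    left
    have hsets : Ed = Es := by
      ext v
      simp only [hEs, hEd, Set.mem_setOf_eq]
      constructor
      · intro hv
        exact gain hA hTC hD hv (fun a ha => nomatch ha)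
      · intro hv
        rcases loss hA hTC hD hv with h1 | ⟨a, ha, -⟩
        · exact h1
        · exact nomatch ha
    rw [hsets]
  · subst hatt
    have hgain : ∀ v, IsExtMajorIn T D v → v ≠ a → IsExtMajorIn T S v := by
      intro v hv hne
      exact gain hA hTC hD hv (fun a' ha' => by
        have h9 : a = a' := Option.some_inj.mp ha'
        rw [← h9]; exact hne)
    have hloss : ∀ v, IsExtMajorIn T S v → ¬ IsExtMajorIn T D v →
        degIn T S a = 2 ∧ v ≠ a ∧ LoserData T S a v := by
      intro v hv hnd
      rcases loss hA hTC hD hv with h1 | ⟨a', ha', h2, h3, h4⟩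
      · exact absurd h1 hnd
      · have h9 : a' = a := Option.some_inj.mp ha'.symm
        subst h9
        exact ⟨h2, h3, h4⟩
    have hgainA : ∀ v, degIn T S a = 2 → LoserData T S a v → IsExtMajorIn T D a := by
      rintro v h2 ⟨u, q, r, hq, hr, hql, hrl, hqs, hrs, hqd, hrd, hu, hv3, hdisj⟩
      have hSD : S ⊆ D := by rw [hD]; exact Finset.subset_union_left
      refine ⟨hSD (hqs a q.start_mem_support), ?_, u, r, hr, hrl, ?_, ?_, ?_⟩
      · rw [deg_D_att hTC hD rfl]
        omega
      · intro x hx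
        exact hSD (hrs x hx)
      · have hua : u ≠ a := fun hc => by rw [hc] at hu; omega
        rw [deg_D_of_S hTC hD (hrs u r.end_mem_support) (fun a' ha' => by
          have h9 : a = a' := Option.some_inj.mp ha'
          rw [← h9]; exact hua)]
        exact hu
      · intro x hx hxa hxu
        rw [deg_D_of_S hTC hD (hrs x hx) (fun a' ha' => by
          have h9 : a = a' := Option.some_inj.mp ha'
          rw [← h9]; exact hxa)]
        exact hrd x hx hxu
    have hfinEs : Es.Finite := Set.toFinite _
    have hfinEd : Ed.Finite := Set.toFinite _
    have hsubB : Ed \ Es ⊆ {a} := by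
      rintro v ⟨hv1, hv2⟩
      by_contra hne
      exact hv2 (hgain v hv1 (by simpa using hne))
    have e1 : (Es ∩ Ed).ncard + (Es \ Ed).ncard = Es.ncard :=
      Set.ncard_inter_add_ncard_diff_eq_ncard Es Ed hfinEs
    have e2 : (Ed ∩ Es).ncard + (Ed \ Es).ncard = Ed.ncard :=
      Set.ncard_inter_add_ncard_diff_eq_ncard Ed Es hfinEd
    have ecomm : (Es ∩ Ed).ncard = (Ed ∩ Es).ncard := by rw [Set.inter_comm]
    have hBle : (Ed \ Es).ncard ≤ 1 := by
      calc (Ed \ Es).ncard ≤ ({a} : Set V).ncard := Set.ncard_le_ncard hsubB (by simp)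
        _ = 1 := Set.ncard_singleton a
    by_cases hAempty : Es \ Ed = ∅
    · have hA0 : (Es \ Ed).ncard = 0 := by rw [hAempty]; simp
      rcases Nat.le_one_iff_eq_zero_or_eq_one.mp hBle with hB | hB
      · left; omega
      · right; omega
    · obtain ⟨v0, hv01, hv02⟩ := Set.nonempty_iff_ne_empty.mpr hAempty
      obtain ⟨h2, hv0a, hLD⟩ := hloss v0 hv01 hv02
      have haEd : IsExtMajorIn T D a := hgainA v0 h2 hLD
      have haEs : ¬ IsExtMajorIn T S a := by
        rintro ⟨-, h3, -⟩
        omega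
      have hAeq : Es \ Ed = {v0} := by
        apply subset_antisymm
        · rintro v ⟨hv1, hv2⟩
          obtain ⟨h2', hva, hLD'⟩ := hloss v hv1 hv2
          have := loser_unique h2 hLD' hLD
          simpa using this
        · intro x hx
          rw [Set.mem_singleton_iff] at hx
          subst hx
          exact ⟨hv01, hv02⟩
      have hBeq : Ed \ Es = {a} := by
        apply subset_antisymm hsubB
        intro x hx
        rw [Set.mem_singleton_iff] at hx
        subst hx
        exact ⟨haEd, haEs⟩
      left
      rw [hAeq, Set.ncard_singleton] at e1
      rw [hBeq, Set.ncard_singleton] at e2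
      omega

lemma rel_all (hA : T.IsAcyclic) (r : ℕ) :
    SDRel T root (stemIter T Finset.univ r) (downStemIter T root Finset.univ r) := by
  induction r with
  | zero => exact Or.inl rfl
  | succ n ih => exact rel_step hA ih

end Aux

/-- For a finite rooted tree `T` and nonnegative integer `r`,
`ex(Stem_r(T)) - ex(Down-Stem_r(T)) ∈ {-1, 0}`, where `ex(H)` is the number of exterior
major vertices of `H`. -/
theorem stmt_15 {V : Type*} [Fintype V] [DecidableEq V] (T : SimpleGraph V)
    [DecidableRel T.Adj] (hT : T.IsTree) (root : V) (r : ℕ) :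
    (exIn T (stemSet T r) : ℤ) - (exIn T (downStemIter T root Finset.univ r) : ℤ) ∈
      ({-1, 0} : Set ℤ) := by
  have hrel := rel_all (root := root) hT.IsAcyclic r
  have hcount := count_step hT.IsAcyclic hrel
  simp only [stemSet, Set.mem_insert_iff, Set.mem_singleton_iff]
  rcases hcount with h | h
  · right; rw [h]; ring
  · left; rw [h]; push_cast; ring
end

section
/- Let T be a finite tree, S a set of vertices of T, and q, q' ∈ S. Let w ≠ w' be two distinct vertices lying on the (unique) shortest path between q and q'. Then for every integer α, Φ_T(w,S) ≠ Φ_T(w',S) + α·1, where 1 is the all-ones vector of length |S|. -/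
open SimpleGraph

/-- In a finite tree `T`, if `w ≠ w'` both lie on the shortest path between
two vertices `q, q'` of a set `S`, then the identification vectors of `w` and `w'` with
respect to `S` do not differ by a constant shift `α·1`. -/
theorem stmt_18 {V : Type*} [Fintype V] [DecidableEq V] (T : SimpleGraph V)
    [DecidableRel T.Adj] (hT : T.IsTree) (S : Finset V) (q q' : V)
    (hq : q ∈ S) (hq' : q' ∈ S) (w w' : V) (hne : w ≠ w')
    (hw : T.dist q w + T.dist w q' = T.dist q q')
    (hw' : T.dist q w' + T.dist w' q' = T.dist q q') :
    ∀ α : ℤ, ¬ (∀ s ∈ S, (T.dist w s : ℤ) = (T.dist w' s : ℤ) + α) := by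
  intro α h
  have hconn := hT.isConnected
  have hqw := h q hq
  have hqw' := h q' hq'
  rw [show T.dist w q = T.dist q w from T.dist_comm,
     show T.dist w' q = T.dist q w' from T.dist_comm] at hqw
  -- α = 0
  have hα : α = 0 := by
    have h1 : (T.dist q w : ℤ) + T.dist w q' = T.dist q q' := by exact_mod_cast hw
    have h2 : (T.dist q w' : ℤ) + T.dist w' q' = T.dist q q' := by exact_mod_cast hw'
    omega
  subst hα
  have hdq : T.dist q w = T.dist q w' := by omega
  -- build the two shortest paths
  obtain ⟨p1, hp1⟩ := (hconn q w).exists_walk_length_eq_dist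
  obtain ⟨p2, hp2⟩ := (hconn w q').exists_walk_length_eq_dist
  obtain ⟨p1', hp1'⟩ := (hconn q w').exists_walk_length_eq_dist
  obtain ⟨p2', hp2'⟩ := (hconn w' q').exists_walk_length_eq_dist
  set p := p1.append p2 with hp
  set p' := p1'.append p2' with hp'
  have hlen : p.length = T.dist q q' := by
    rw [hp, SimpleGraph.Walk.length_append, hp1, hp2]; exact hw
  have hlen' : p'.length = T.dist q q' := by
    rw [hp', SimpleGraph.Walk.length_append, hp1', hp2']; exact hw'
  have hpath : p.IsPath := p.isPath_of_length_eq_dist hlen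
  have hpath' : p'.IsPath := p'.isPath_of_length_eq_dist hlen'
  have heq : p = p' := by
    have := hT.existsUnique_path q q'
    exact ((this).unique hpath hpath')
  apply hne
  have e1 : p.getVert (T.dist q w) = w := by
    rw [hp, SimpleGraph.Walk.getVert_append, ← hp1]
    simp
  have e2 : p'.getVert (T.dist q w') = w' := by
    rw [hp', SimpleGraph.Walk.getVert_append, ← hp1']
    simp
  rw [← e1, ← e2, heq, hdq]
end
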